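/- arXiv:2408.00034 — 5 statements merged into one kernel-verified Lean document; each statement's English description precedes it below -/
import Mathlib

section
/- Let $T$ be a positive operator on $L^p(\Omega,\mu)$ with $p\in(1,\infty)$, and let $\mathcal{C}$ and $\mathcal{C}'$ be two antichains of atoms of $T$ (atoms ordered by $A \preccurlyeq B$ iff $\mathcal{F}(A)\subset\mathcal{F}(B)$ a.e., where $\mathcal{F}$ denotes the future, i.e. the smallest invariant set containing a given set). Then $\mathcal{F}(\mathcal{C}) = \mathcal{F}(\mathcal{C}')$ a.e. if and only if $\mathcal{C} = \mathcal{C}'$. -/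
open MeasureTheory ENNReal

variable {Ω : Type*} [MeasurableSpace Ω]

/-- A.e. inclusion of sets: `A ⊂ B` up to a `μ`-null set. -/
def AESub (μ : Measure Ω) (A B : Set Ω) : Prop := μ (A \ B) = 0

/-- A.e. equality of sets. -/
def AESetEq (μ : Measure Ω) (A B : Set Ω) : Prop := μ (symmDiff A B) = 0

/-- A positive operator on `L^p`. -/
def IsPositiveOp {p : ℝ≥0∞} [Fact (1 ≤ p)] (μ : Measure Ω)
    (T : Lp ℝ p μ →L[ℝ] Lp ℝ p μ) : Prop :=
  ∀ f : Lp ℝ p μ, 0 ≤ f → 0 ≤ T f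

/-- A measurable set `A` is `T`-invariant: `M_{Aᶜ} T M_A = 0`, i.e. `T` maps functions
supported in `A` to functions supported in `A`. -/
def IsInvariantSet {p : ℝ≥0∞} [Fact (1 ≤ p)] (μ : Measure Ω)
    (T : Lp ℝ p μ →L[ℝ] Lp ℝ p μ) (A : Set Ω) : Prop :=
  MeasurableSet A ∧
    ∀ f : Lp ℝ p μ, (∀ᵐ x ∂μ, x ∉ A → f x = 0) → ∀ᵐ x ∂μ, x ∉ A → (T f) x = 0

/-- Admissible sets: members of the σ-field generated by the invariant sets. -/
def IsAdmissibleSet {p : ℝ≥0∞} [Fact (1 ≤ p)] (μ : Measure Ω)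
    (T : Lp ℝ p μ →L[ℝ] Lp ℝ p μ) (A : Set Ω) : Prop :=
  MeasurableSet[MeasurableSpace.generateFrom {B | IsInvariantSet μ T B}] A

/-- An atom: a minimal admissible set of positive measure. -/
def IsAtomSet {p : ℝ≥0∞} [Fact (1 ≤ p)] (μ : Measure Ω)
    (T : Lp ℝ p μ →L[ℝ] Lp ℝ p μ) (A : Set Ω) : Prop :=
  IsAdmissibleSet μ T A ∧ 0 < μ A ∧
    ∀ B, IsAdmissibleSet μ T B → AESub μ B A → (μ B = 0 ∨ AESetEq μ B A)

/-- `FA` is the future of `A`: the smallest invariant set containing `A`, up to null sets. -/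
def IsFutureOf {p : ℝ≥0∞} [Fact (1 ≤ p)] (μ : Measure Ω)
    (T : Lp ℝ p μ →L[ℝ] Lp ℝ p μ) (A FA : Set Ω) : Prop :=
  IsInvariantSet μ T FA ∧ AESub μ A FA ∧
    ∀ B, IsInvariantSet μ T B → AESub μ A B → AESub μ FA B


section AuxLemmas

open Filter

variable {μ : Measure Ω}

lemma aesub_of_subset {A B : Set Ω} (h : A ⊆ B) : AESub μ A B := by
  simp [AESub, Set.diff_eq_empty.2 h]

lemma AESub.trans' {A B C : Set Ω} (h1 : AESub μ A B) (h2 : AESub μ B C) : AESub μ A C := by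
  refine measure_mono_null (fun x hx => ?_) (measure_union_null h1 h2)
  by_cases hxB : x ∈ B
  · exact Or.inr ⟨hxB, hx.2⟩
  · exact Or.inl ⟨hx.1, hxB⟩

lemma aesub_mono_left {A B C : Set Ω} (h : A ⊆ B) (hB : AESub μ B C) : AESub μ A C :=
  measure_mono_null (Set.diff_subset_diff_left h) hB

lemma aesetEq_of_aesub {A B : Set Ω} (h1 : AESub μ A B) (h2 : AESub μ B A) : AESetEq μ A B := by
  rw [AESetEq, Set.symmDiff_def]
  exact measure_union_null h1 h2

lemma AESetEq.aesub {A B : Set Ω} (h : AESetEq μ A B) : AESub μ A B :=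
  measure_mono_null (by rw [Set.symmDiff_def]; exact Set.subset_union_left) h

lemma AESetEq.symm' {A B : Set Ω} (h : AESetEq μ A B) : AESetEq μ B A := by
  rwa [AESetEq, symmDiff_comm]

lemma AESetEq.aesub' {A B : Set Ω} (h : AESetEq μ A B) : AESub μ B A := h.symm'.aesub

lemma sUnion_aesub {D : Set (Set Ω)} (hDc : D.Countable) {Z : Set Ω}
    (h : ∀ A ∈ D, AESub μ A Z) : AESub μ (⋃₀ D) Z := by
  have h0 : μ (⋃ A ∈ D, (A \ Z)) = 0 := (measure_biUnion_null_iff hDc).2 h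
  refine measure_mono_null (fun x hx => ?_) h0
  obtain ⟨A, hA, hxA⟩ := hx.1
  exact Set.mem_biUnion hA ⟨hxA, hx.2⟩

lemma biUnion_aesub {D : Set (Set Ω)} (hDc : D.Countable) {s : Set Ω → Set Ω} {Z : Set Ω}
    (h : ∀ A ∈ D, AESub μ (s A) Z) : AESub μ (⋃ A ∈ D, s A) Z := by
  have h0 : μ (⋃ A ∈ D, (s A \ Z)) = 0 := (measure_biUnion_null_iff hDc).2 h
  refine measure_mono_null (fun x hx => ?_) h0
  obtain ⟨A, hA, hxA⟩ := Set.mem_iUnion₂.1 hx.1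
  exact Set.mem_biUnion hA ⟨hxA, hx.2⟩

end AuxLemmas

section OpLemmas

open Filter

variable {μ : Measure Ω} {p : ℝ≥0∞} [Fact (1 ≤ p)]

lemma coeFn_sum'' (fs : ℕ → Lp ℝ p μ) (s : Finset ℕ) :
    ⇑(∑ k ∈ s, fs k) =ᵐ[μ] fun x => ∑ k ∈ s, fs k x := by
  classical
  induction s using Finset.induction_on with
  | empty => simp only [Finset.sum_empty]; exact Lp.coeFn_zero (E := ℝ) (p := p) (μ := μ)
  | @insert a s ha ih =>
    rw [Finset.sum_insert ha]
    filter_upwards [Lp.coeFn_add (fs a) (∑ k ∈ s, fs k), ih] with x h1 h2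
    simp only [h1, Pi.add_apply, h2, Finset.sum_insert ha]

lemma sum_indicator_of_disjoint {D : ℕ → Set Ω} (hd : Pairwise (Function.onFun Disjoint D))
    (f : Ω → ℝ) (n : ℕ) (x : Ω) :
    ∑ k ∈ Finset.range n, (D k).indicator f x = (⋃ k ∈ Finset.range n, D k).indicator f x := by
  by_cases hx : ∃ k ∈ Finset.range n, x ∈ D k
  · obtain ⟨k, hk, hxk⟩ := hx
    have hmem : x ∈ ⋃ k ∈ Finset.range n, D k := by
      exact Set.mem_biUnion hk hxk
    rw [Set.indicator_of_mem hmem, Finset.sum_eq_single k]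
    · exact Set.indicator_of_mem hxk f
    · intro j hj hjk
      exact Set.indicator_of_notMem
        (fun hxj => Set.disjoint_left.mp (hd hjk) hxj hxk) f
    · intro hk'; exact (hk' hk).elim
  · push_neg at hx
    have hmem : x ∉ ⋃ k ∈ Finset.range n, D k := by
      simpa using fun k hk => hx k hk
    rw [Set.indicator_of_notMem hmem,
      Finset.sum_eq_zero fun k hk => Set.indicator_of_notMem (hx k hk) f]

lemma isInvariantSet_empty (T : Lp ℝ p μ →L[ℝ] Lp ℝ p μ) :
    IsInvariantSet μ T (∅ : Set Ω) := by
  refine ⟨MeasurableSet.empty, fun f hf => ?_⟩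
  have hf0 : f = 0 := by
    rw [Lp.eq_zero_iff_ae_eq_zero]
    filter_upwards [hf] with x hx
    simp [hx (Set.notMem_empty x)]
  subst hf0
  rw [map_zero]
  filter_upwards [Lp.coeFn_zero (E := ℝ) (p := p) (μ := μ)] with x hx _
  exact hx

lemma isInvariantSet_iUnion (hp2 : p ≠ ∞)
    (T : Lp ℝ p μ →L[ℝ] Lp ℝ p μ) (I : ℕ → Set Ω) (hI : ∀ n, IsInvariantSet μ T (I n)) :
    IsInvariantSet μ T (⋃ n, I n) := by
  have hp0 : p ≠ 0 := (lt_of_lt_of_le zero_lt_one Fact.out).ne'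
  have hpt : 0 < p.toReal := ENNReal.toReal_pos hp0 hp2
  have hmeas : ∀ n, MeasurableSet (I n) := fun n => (hI n).1
  refine ⟨MeasurableSet.iUnion hmeas, fun f hf => ?_⟩
  set U : Set Ω := ⋃ n, I n with hUdef
  set D : ℕ → Set Ω := disjointed I with hDdef
  have hDmeas : ∀ n, MeasurableSet (D n) := MeasurableSet.disjointed hmeas
  have hDsub : ∀ n, D n ⊆ I n := disjointed_subset I
  have hg : ∀ n, MemLp ((D n).indicator (f : Ω → ℝ)) p μ :=
    fun n => (Lp.memLp f).indicator (hDmeas n)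
  set g : ℕ → Lp ℝ p μ := fun n => (hg n).toLp _ with hgdef
  set S : ℕ → Lp ℝ p μ := fun n => ∑ k ∈ Finset.range n, g k with hSdef
  set E : ℕ → Set Ω := fun n => ⋃ k ∈ Finset.range n, D k with hEdef
  have hEmeas : ∀ n, MeasurableSet (E n) :=
    fun n => (Finset.range n).measurableSet_biUnion (fun k _ => hDmeas k)
  have hScoe : ∀ n, ⇑(S n) =ᵐ[μ] (E n).indicator f := by
    intro n
    have h2 : ∀ᵐ x ∂μ, ∀ k ∈ Finset.range n, (g k) x = (D k).indicator f x :=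
      (eventually_all_finset (Finset.range n)).2 fun k _ => (hg k).coeFn_toLp
    filter_upwards [coeFn_sum'' g (Finset.range n), h2] with x hx1 hx2
    rw [hx1, Finset.sum_congr rfl hx2]
    exact sum_indicator_of_disjoint (disjoint_disjointed I) f n x
  have hTg : ∀ k, ∀ᵐ x ∂μ, x ∉ I k → (T (g k)) x = 0 := by
    intro k
    refine (hI k).2 (g k) ?_
    filter_upwards [(hg k).coeFn_toLp] with x hx hxk
    rw [hx]
    exact Set.indicator_of_notMem (fun hmem => hxk (hDsub k hmem)) f
  have hTS : ∀ n, ∀ᵐ x ∂μ, x ∉ U → (T (S n)) x = 0 := by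
    intro n
    have hmap : T (S n) = ∑ k ∈ Finset.range n, T (g k) := map_sum T g (Finset.range n)
    have h2 : ∀ᵐ x ∂μ, ∀ k ∈ Finset.range n, x ∉ I k → (T (g k)) x = 0 :=
      (eventually_all_finset (Finset.range n)).2 fun k _ => hTg k
    filter_upwards [coeFn_sum'' (fun k => T (g k)) (Finset.range n), h2] with x hx1 hx2 hxU
    rw [hmap, hx1]
    exact Finset.sum_eq_zero fun k hk =>
      hx2 k hk (fun hxI => hxU (Set.mem_iUnion.2 ⟨k, hxI⟩))
  have hconv : Tendsto S atTop (nhds f) := by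
    rw [Lp.tendsto_Lp_iff_tendsto_eLpNorm']
    have hcongr : ∀ n, eLpNorm (⇑(S n) - ⇑f) p μ = eLpNorm ((E n)ᶜ.indicator f) p μ := by
      intro n
      rw [← eLpNorm_neg]
      refine eLpNorm_congr_ae ?_
      filter_upwards [hScoe n] with x hx
      simp only [Pi.neg_apply, Pi.sub_apply, hx]
      by_cases hxE : x ∈ E n
      · rw [Set.indicator_of_mem hxE, Set.indicator_of_notMem
          (show x ∉ (E n)ᶜ from fun h => h hxE)]
        ring
      · rw [Set.indicator_of_notMem hxE, Set.indicator_of_mem (show x ∈ (E n)ᶜ from hxE)]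
        ring
    simp only [hcongr]
    have key : Tendsto (fun n => ∫⁻ x, (‖(E n)ᶜ.indicator (⇑f) x‖₊ : ℝ≥0∞) ^ p.toReal ∂μ)
        atTop (nhds 0) := by
      have h0 : (0 : ℝ≥0∞) = ∫⁻ _, (0 : ℝ≥0∞) ∂μ := by simp
      rw [h0]
      refine tendsto_lintegral_of_dominated_convergence'
        (fun x => (‖f x‖₊ : ℝ≥0∞) ^ p.toReal)
        (fun n => ?_) (fun n => ?_) ?_ ?_
      · exact (ENNReal.continuous_rpow_const.measurable).comp_aemeasurable
          ((Lp.aestronglyMeasurable f).indicator (hEmeas n).compl).enorm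
      · refine Filter.Eventually.of_forall fun x => ?_
        refine ENNReal.rpow_le_rpow ?_ hpt.le
        simp only [ENNReal.coe_le_coe]
        by_cases hxE : x ∈ (E n)ᶜ
        · rw [Set.indicator_of_mem hxE]
        · rw [Set.indicator_of_notMem hxE]; simp
      · exact (lintegral_rpow_enorm_lt_top_of_eLpNorm_lt_top hp0 hp2
          (Lp.eLpNorm_lt_top f)).ne
      · filter_upwards [hf] with x hx
        by_cases hxU : x ∈ U
        · have hxD : x ∈ ⋃ n, D n := by
            rw [hDdef, iUnion_disjointed]
            exact hxU
          obtain ⟨k, hk⟩ := Set.mem_iUnion.1 hxD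
          refine tendsto_atTop_of_eventually_const (i₀ := k + 1) fun n hn => ?_
          have hxE : x ∈ E n := by
            rw [hEdef]
            exact Set.mem_biUnion (Finset.mem_range.2 hn) hk
          rw [Set.indicator_of_notMem (show x ∉ (E n)ᶜ from fun h => h hxE)]
          simp [ENNReal.zero_rpow_of_pos hpt]
        · have hfx : f x = 0 := hx hxU
          refine tendsto_atTop_of_eventually_const (i₀ := 0) fun n _ => ?_
          by_cases hxE : x ∈ (E n)ᶜ
          · rw [Set.indicator_of_mem hxE, hfx]
            simp [ENNReal.zero_rpow_of_pos hpt]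
          · rw [Set.indicator_of_notMem hxE]
            simp [ENNReal.zero_rpow_of_pos hpt]
    have heq : ∀ n, eLpNorm ((E n)ᶜ.indicator (⇑f)) p μ
        = (∫⁻ x, (‖(E n)ᶜ.indicator (⇑f) x‖₊ : ℝ≥0∞) ^ p.toReal ∂μ) ^ (1 / p.toReal) := by
      intro n
      rw [eLpNorm_eq_lintegral_rpow_enorm_toReal hp0 hp2]
      rfl
    simp only [heq]
    have hc : Tendsto (fun y : ℝ≥0∞ => y ^ (1 / p.toReal)) (nhds 0) (nhds 0) := by
      have := (ENNReal.continuous_rpow_const (y := 1 / p.toReal)).tendsto 0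
      rwa [ENNReal.zero_rpow_of_pos (by positivity)] at this
    exact hc.comp key
  have hTconv : Tendsto (fun n => T (S n)) atTop (nhds (T f)) :=
    ((T.continuous.tendsto f).comp hconv)
  have hnorm : Tendsto (fun n => eLpNorm (⇑(T f) - ⇑(T (S n))) p μ) atTop (nhds 0) := by
    have h := (Lp.tendsto_Lp_iff_tendsto_eLpNorm' (fun n => T (S n)) (T f)).1 hTconv
    refine h.congr fun n => ?_
    rw [← eLpNorm_neg, neg_sub]
  have hkey : eLpNorm (Uᶜ.indicator (⇑(T f))) p μ = 0 := by
    have hle : ∀ n, eLpNorm (Uᶜ.indicator (⇑(T f))) p μ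
        ≤ eLpNorm (⇑(T f) - ⇑(T (S n))) p μ := by
      intro n
      have hae : Uᶜ.indicator (⇑(T f))
          =ᵐ[μ] Uᶜ.indicator (⇑(T f) - ⇑(T (S n))) := by
        filter_upwards [hTS n] with x hx
        by_cases hxU : x ∈ U
        · rw [Set.indicator_of_notMem (show x ∉ Uᶜ from fun h => h hxU),
            Set.indicator_of_notMem (show x ∉ Uᶜ from fun h => h hxU)]
        · rw [Set.indicator_of_mem (show x ∈ Uᶜ from hxU),
            Set.indicator_of_mem (show x ∈ Uᶜ from hxU)]
          simp [hx hxU]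
      rw [eLpNorm_congr_ae hae]
      exact eLpNorm_indicator_le _
    exact le_zero_iff.1 (ge_of_tendsto' hnorm hle)
  have hUm : MeasurableSet U := MeasurableSet.iUnion hmeas
  have hzero : Uᶜ.indicator (⇑(T f)) =ᵐ[μ] 0 :=
    (eLpNorm_eq_zero_iff
      ((Lp.aestronglyMeasurable (T f)).indicator hUm.compl) hp0).1 hkey
  filter_upwards [hzero] with x hx hxU
  have h2 : Uᶜ.indicator (⇑(T f)) x = (T f) x :=
    Set.indicator_of_mem (show x ∈ Uᶜ from hxU) _
  rw [← h2, hx]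
  rfl

lemma isInvariantSet_sUnion (hp2 : p ≠ ∞)
    (T : Lp ℝ p μ →L[ℝ] Lp ℝ p μ) (s : Set (Set Ω)) (hs : s.Countable)
    (h : ∀ I ∈ s, IsInvariantSet μ T I) : IsInvariantSet μ T (⋃₀ s) := by
  rcases s.eq_empty_or_nonempty with rfl | hne
  · simpa using isInvariantSet_empty T
  · obtain ⟨I, rfl⟩ := hs.exists_eq_range hne
    rw [Set.sUnion_range]
    exact isInvariantSet_iUnion hp2 T I fun n => h (I n) ⟨n, rfl⟩

lemma isAdmissible_of_invariant {T : Lp ℝ p μ →L[ℝ] Lp ℝ p μ} {A : Set Ω}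
    (h : IsInvariantSet μ T A) : IsAdmissibleSet μ T A :=
  MeasurableSpace.measurableSet_generateFrom h

lemma atom_dichotomy {T : Lp ℝ p μ →L[ℝ] Lp ℝ p μ} {A D : Set Ω}
    (hA : IsAtomSet μ T A) (hD : IsAdmissibleSet μ T D) :
    μ (A \ D) = 0 ∨ μ (A ∩ D) = 0 := by
  have hAD : IsAdmissibleSet μ T (A ∩ D) := MeasurableSet.inter hA.1 hD
  rcases hA.2.2 (A ∩ D) hAD (aesub_of_subset Set.inter_subset_left) with h | h
  · exact Or.inr h
  · left
    have h2 : μ (A \ (A ∩ D)) = 0 := by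
      refine measure_mono_null (fun x hx => ?_) h
      rw [Set.mem_symmDiff]
      exact Or.inr ⟨hx.1, hx.2⟩
    rwa [Set.diff_self_inter] at h2

lemma atoms_eq_of_future {T : Lp ℝ p μ →L[ℝ] Lp ℝ p μ}
    (𝓕 : Set Ω → Set Ω) (h𝓕 : ∀ A : Set Ω, IsFutureOf μ T A (𝓕 A))
    {A B : Set Ω} (hA : IsAtomSet μ T A) (hB : IsAtomSet μ T B)
    (h1 : AESub μ (𝓕 A) (𝓕 B)) (h2 : AESub μ (𝓕 B) (𝓕 A)) : AESetEq μ A B := by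
  have htrans : ∀ {X Y : Set Ω}, AESub μ (𝓕 X) (𝓕 Y) →
      ∀ I : Set Ω, IsInvariantSet μ T I → μ (Y \ I) = 0 → μ (X \ I) = 0 := by
    intro X Y h I hI hYI
    have hFYI : AESub μ (𝓕 Y) I := (h𝓕 Y).2.2 I hI hYI
    exact (h𝓕 X).2.1.trans' (h.trans' hFYI)
  set P : Set Ω → Prop := fun D =>
    (μ (A \ D) = 0 ∧ μ (B \ D) = 0) ∨ (μ (A ∩ D) = 0 ∧ μ (B ∩ D) = 0) with hPdef
  have hP : ∀ D : Set Ω, IsAdmissibleSet μ T D → P D := by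
    intro D hD
    refine MeasurableSpace.generateFrom_induction {B : Set Ω | IsInvariantSet μ T B}
      (fun D _ => P D) ?_ ?_ ?_ ?_ D hD
    · intro I hI _
      rcases atom_dichotomy hA (isAdmissible_of_invariant hI) with hd | hd
      · exact Or.inl ⟨hd, htrans h2 I hI hd⟩
      · rcases atom_dichotomy hB (isAdmissible_of_invariant hI) with hd' | hd'
        · have hAI : μ (A \ I) = 0 := htrans h1 I hI hd'
          have hA0 : μ A = 0 := by
            refine measure_mono_null (fun x hx => ?_) (measure_union_null hAI hd)
            by_cases h : x ∈ I
            · exact Or.inr ⟨hx, h⟩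
            · exact Or.inl ⟨hx, h⟩
          exact absurd hA0 hA.2.1.ne'
        · exact Or.inr ⟨hd, hd'⟩
    · exact Or.inr (by simp)
    · intro t _ ht
      have e1 : ∀ X : Set Ω, X \ tᶜ = X ∩ t := fun X => by
        rw [Set.diff_eq, compl_compl]
      have e2 : ∀ X : Set Ω, X ∩ tᶜ = X \ t := fun X => (Set.diff_eq X t).symm
      rcases ht with ⟨ha, hb⟩ | ⟨ha, hb⟩
      · exact Or.inr ⟨by rwa [e2 A], by rwa [e2 B]⟩
      · exact Or.inl ⟨by rwa [e1 A], by rwa [e1 B]⟩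
    · intro gs _ hgs
      by_cases hex : ∃ n, μ (A \ gs n) = 0 ∧ μ (B \ gs n) = 0
      · obtain ⟨n, ha, hb⟩ := hex
        exact Or.inl
          ⟨measure_mono_null (Set.diff_subset_diff_right (Set.subset_iUnion gs n)) ha,
           measure_mono_null (Set.diff_subset_diff_right (Set.subset_iUnion gs n)) hb⟩
      · have hall : ∀ n, μ (A ∩ gs n) = 0 ∧ μ (B ∩ gs n) = 0 :=
          fun n => (hgs n).resolve_left fun hl => hex ⟨n, hl⟩
        refine Or.inr ⟨?_, ?_⟩
        · rw [Set.inter_iUnion]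
          exact measure_iUnion_null fun n => (hall n).1
        · rw [Set.inter_iUnion]
          exact measure_iUnion_null fun n => (hall n).2
  have hPA : P A := hP A hA.1
  have hPB : P B := hP B hB.1
  have hBA : μ (B \ A) = 0 := by
    rcases hPA with ⟨_, h⟩ | ⟨h, _⟩
    · exact h
    · rw [Set.inter_self] at h
      exact absurd h hA.2.1.ne'
  have hAB : μ (A \ B) = 0 := by
    rcases hPB with ⟨h, _⟩ | ⟨_, h⟩
    · exact h
    · rw [Set.inter_self] at h
      exact absurd h hB.2.1.ne'
  exact aesetEq_of_aesub hAB hBA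

lemma exists_future_sub {T : Lp ℝ p μ →L[ℝ] Lp ℝ p μ}
    (𝓕 : Set Ω → Set Ω) (h𝓕 : ∀ A : Set Ω, IsFutureOf μ T A (𝓕 A))
    {D : Set (Set Ω)} (hDc : D.Countable) {A : Set Ω} (hA : IsAtomSet μ T A)
    (hAU : AESub μ A (⋃ B ∈ D, 𝓕 B)) : ∃ B ∈ D, AESub μ (𝓕 A) (𝓕 B) := by
  by_contra hcon
  push_neg at hcon
  have hnull : ∀ B ∈ D, μ (A ∩ 𝓕 B) = 0 := by
    intro B hB
    rcases atom_dichotomy hA (isAdmissible_of_invariant (h𝓕 B).1) with hd | hd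
    · exact absurd ((h𝓕 A).2.2 _ (h𝓕 B).1 hd) (hcon B hB)
    · exact hd
  have hU : μ (A ∩ ⋃ B ∈ D, 𝓕 B) = 0 := by
    rw [Set.inter_iUnion₂]
    exact (measure_biUnion_null_iff hDc).2 hnull
  have hA0 : μ A = 0 := by
    refine measure_mono_null (fun x hx => ?_) (measure_union_null hU hAU)
    by_cases h : x ∈ ⋃ B ∈ D, 𝓕 B
    · exact Or.inl ⟨hx, h⟩
    · exact Or.inr ⟨hx, h⟩
  exact absurd hA0 hA.2.1.ne'

lemma future_sUnion_aeeq (hp2 : p ≠ ∞) {T : Lp ℝ p μ →L[ℝ] Lp ℝ p μ}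
    (𝓕 : Set Ω → Set Ω) (h𝓕 : ∀ A : Set Ω, IsFutureOf μ T A (𝓕 A))
    {D : Set (Set Ω)} (hDc : D.Countable) :
    AESetEq μ (𝓕 (⋃₀ D)) (⋃ B ∈ D, 𝓕 B) := by
  have hUinv : IsInvariantSet μ T (⋃ B ∈ D, 𝓕 B) := by
    have h := isInvariantSet_sUnion hp2 T (𝓕 '' D) (hDc.image _)
      (by rintro _ ⟨B, hB, rfl⟩; exact (h𝓕 B).1)
    rwa [Set.sUnion_image] at h
  refine aesetEq_of_aesub ?_ ?_
  · refine (h𝓕 (⋃₀ D)).2.2 _ hUinv ?_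
    refine sUnion_aesub hDc fun A hA => ?_
    exact (h𝓕 A).2.1.trans' (aesub_of_subset (Set.subset_biUnion_of_mem hA))
  · refine biUnion_aesub hDc fun A hA => ?_
    exact (h𝓕 A).2.2 _ (h𝓕 (⋃₀ D)).1
      (aesub_mono_left (Set.subset_sUnion_of_mem hA) (h𝓕 (⋃₀ D)).2.1)

lemma key_forward (hp2 : p ≠ ∞) {T : Lp ℝ p μ →L[ℝ] Lp ℝ p μ}
    (𝓕 : Set Ω → Set Ω) (h𝓕 : ∀ A : Set Ω, IsFutureOf μ T A (𝓕 A))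
    {C C' : Set (Set Ω)} (hCc : C.Countable) (hC'c : C'.Countable)
    (hC : ∀ A ∈ C, IsAtomSet μ T A) (hC' : ∀ A ∈ C', IsAtomSet μ T A)
    (hanti : ∀ A ∈ C, ∀ B ∈ C, ¬ AESetEq μ A B →
      ¬ AESub μ (𝓕 A) (𝓕 B) ∧ ¬ AESub μ (𝓕 B) (𝓕 A))
    (heq : AESetEq μ (𝓕 (⋃₀ C)) (𝓕 (⋃₀ C'))) :
    ∀ A ∈ C, ∃ B ∈ C', AESetEq μ A B := by
  intro A hAmem
  have hA := hC A hAmem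
  have hAU : AESub μ A (⋃ B ∈ C', 𝓕 B) :=
    ((aesub_mono_left (Set.subset_sUnion_of_mem hAmem) (h𝓕 (⋃₀ C)).2.1).trans'
      heq.aesub).trans' (future_sUnion_aeeq hp2 𝓕 h𝓕 hC'c).aesub
  obtain ⟨B, hBmem, hFAB⟩ := exists_future_sub 𝓕 h𝓕 hC'c hA hAU
  have hB := hC' B hBmem
  have hBV : AESub μ B (⋃ A' ∈ C, 𝓕 A') :=
    ((aesub_mono_left (Set.subset_sUnion_of_mem hBmem) (h𝓕 (⋃₀ C')).2.1).trans'
      heq.aesub').trans' (future_sUnion_aeeq hp2 𝓕 h𝓕 hCc).aesub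
  obtain ⟨A', hA'mem, hFBA'⟩ := exists_future_sub 𝓕 h𝓕 hCc hB hBV
  have hAA' : AESetEq μ A A' := by
    by_contra hne
    exact (hanti A hAmem A' hA'mem hne).1 (hFAB.trans' hFBA')
  have hFA'A : AESub μ (𝓕 A') (𝓕 A) :=
    (h𝓕 A').2.2 _ (h𝓕 A).1 (hAA'.aesub'.trans' (h𝓕 A).2.1)
  exact ⟨B, hBmem, atoms_eq_of_future 𝓕 h𝓕 hA hB hFAB (hFBA'.trans' hFA'A)⟩

end OpLemmas

/-- **Antichains with the same future are equal.**  Two antichains of atoms of a positive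
operator `T` on `L^p`, `p ∈ (1,∞)`, have a.e. the same future if and only if they are equal
(up to a.e. identification of atoms).  The order is `A ≼ B` iff `𝓕(A) ⊂ 𝓕(B)` a.e. -/
theorem antichains_with_same_future_are_equal
    {μ : Measure Ω} [SigmaFinite μ] (hμ : μ ≠ 0)
    {p : ℝ≥0∞} [Fact (1 ≤ p)] (hp1 : 1 < p) (hp2 : p ≠ ∞)
    (T : Lp ℝ p μ →L[ℝ] Lp ℝ p μ) (hT : IsPositiveOp μ T)
    (𝓕 : Set Ω → Set Ω) (h𝓕 : ∀ A : Set Ω, IsFutureOf μ T A (𝓕 A))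
    (C C' : Set (Set Ω)) (hCc : C.Countable) (hC'c : C'.Countable)
    (hC : ∀ A ∈ C, IsAtomSet μ T A) (hC' : ∀ A ∈ C', IsAtomSet μ T A)
    (hanti : ∀ A ∈ C, ∀ B ∈ C, ¬ AESetEq μ A B →
      ¬ AESub μ (𝓕 A) (𝓕 B) ∧ ¬ AESub μ (𝓕 B) (𝓕 A))
    (hanti' : ∀ A ∈ C', ∀ B ∈ C', ¬ AESetEq μ A B →
      ¬ AESub μ (𝓕 A) (𝓕 B) ∧ ¬ AESub μ (𝓕 B) (𝓕 A)) :
    AESetEq μ (𝓕 (⋃₀ C)) (𝓕 (⋃₀ C')) ↔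
      ((∀ A ∈ C, ∃ B ∈ C', AESetEq μ A B) ∧ (∀ B ∈ C', ∃ A ∈ C, AESetEq μ A B)) := by
  constructor
  · intro heq
    exact ⟨key_forward hp2 𝓕 h𝓕 hCc hC'c hC hC' hanti heq,
      fun B hB => by
        obtain ⟨A, hA, hBA⟩ :=
          key_forward hp2 𝓕 h𝓕 hC'c hCc hC' hC hanti' heq.symm' B hB
        exact ⟨A, hA, hBA.symm'⟩⟩
  · rintro ⟨h1, h2⟩
    refine aesetEq_of_aesub ?_ ?_
    · refine (h𝓕 (⋃₀ C)).2.2 _ (h𝓕 (⋃₀ C')).1 ?_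
      refine sUnion_aesub hCc fun A hA => ?_
      obtain ⟨B, hB, hAB⟩ := h1 A hA
      exact hAB.aesub.trans'
        (aesub_mono_left (Set.subset_sUnion_of_mem hB) (h𝓕 (⋃₀ C')).2.1)
    · refine (h𝓕 (⋃₀ C')).2.2 _ (h𝓕 (⋃₀ C)).1 ?_
      refine sUnion_aesub hC'c fun B hB => ?_
      obtain ⟨A, hA, hAB⟩ := h2 B hB
      exact hAB.aesub'.trans'
        (aesub_mono_left (Set.subset_sUnion_of_mem hA) (h𝓕 (⋃₀ C)).2.1)
end

section
/- Under Assumption 2 (SIS model $(T,\gamma,\varphi)$ with $T$ positive bounded on $L^\infty$ mapping continuously $L^p$-norm to $L^\infty$-norm via $\|Tf\|_\infty \leq C\|\gamma f\|_p$, $\gamma\in L^\infty$ positive a.e., $\varphi$ locally Lipschitz, decreasing on $[0,1]$, $\varphi(0)=1$, $\varphi(1)=0$), if $g, h \in \Delta$ are two equilibria ($F(g)=F(h)=0$ where $F(u)=\varphi(u)Tu-\gamma u$) with the same support ($\operatorname{supp}(g)=\operatorname{supp}(h)$ a.e.), then $g = h$ a.e. -/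
open MeasureTheory ENNReal Filter Topology

set_option maxHeartbeats 1600000

/-- **Two equilibria with the same support are equal** (Assumption 2).
The SIS model `(T,γ,φ)` satisfies: `μ` finite non-zero, `T` a positive bounded operator on
`L^∞` with `‖Tf‖_∞ ≤ C ‖γ f‖_p` for some `p ∈ (1,∞)`, `γ ∈ L^∞` positive a.e., and `φ`
locally Lipschitz, decreasing on `[0,1]`, `φ(0)=1`, `φ(1)=0`.  If `g, h ∈ Δ` are equilibria
(`F(g)=F(h)=0` where `F(u)=φ(u)Tu−γu`) with a.e. equal supports, then `g = h` a.e. -/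
theorem equilibria_same_support_eq
    {Ω : Type*} [MeasurableSpace Ω] {μ : Measure Ω} [IsFiniteMeasure μ] (hμ : μ ≠ 0)
    {p : ℝ≥0∞} [Fact (1 ≤ p)] (hp1 : 1 < p) (hp2 : p ≠ ∞)
    (T : Lp ℝ ∞ μ →L[ℝ] Lp ℝ ∞ μ) (hT : ∀ f : Lp ℝ ∞ μ, 0 ≤ f → 0 ≤ T f)
    (γ : Lp ℝ ∞ μ) (hγ : ∀ᵐ x ∂μ, 0 < γ x)
    (C : ℝ≥0∞) (hC : C ≠ ∞)
    (hTbound : ∀ f : Lp ℝ ∞ μ,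
      (‖T f‖₊ : ℝ≥0∞) ≤ C * eLpNorm (fun x => γ x * f x) p μ)
    (φ : ℝ → ℝ) (hφlip : LocallyLipschitz φ) (hφanti : StrictAntiOn φ (Set.Icc 0 1))
    (hφnn : ∀ r ∈ Set.Icc (0:ℝ) 1, 0 ≤ φ r) (hφ0 : φ 0 = 1) (hφ1 : φ 1 = 0)
    (F : Lp ℝ ∞ μ → Lp ℝ ∞ μ)
    (hF : ∀ u : Lp ℝ ∞ μ, ⇑(F u) =ᵐ[μ] fun x => φ (u x) * (T u) x - γ x * u x)
    (g h : Lp ℝ ∞ μ)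
    (hg : ∀ᵐ x ∂μ, g x ∈ Set.Icc (0:ℝ) 1) (hh : ∀ᵐ x ∂μ, h x ∈ Set.Icc (0:ℝ) 1)
    (hgeq : F g = 0) (hheq : F h = 0)
    (hsupp : μ (symmDiff {x | g x ≠ 0} {x | h x ≠ 0}) = 0) :
    ⇑g =ᵐ[μ] ⇑h := by
  classical
  -- an elementary real lemma
  have hreal_le : ∀ {a b : ℝ}, (∀ ε : ℝ, 0 < ε → a ≤ b + ε) → a ≤ b := by
    intro a b hab
    by_contra hlt
    push_neg at hlt
    have := hab ((a - b) / 2) (by linarith)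
    linarith
  -- basic facts about φ
  have hφle : ∀ {a b : ℝ}, 0 ≤ a → a ≤ b → b ≤ 1 → φ b ≤ φ a := by
    intro a b ha hab hb1
    rcases eq_or_lt_of_le hab with rfl | hlt
    · exact le_rfl
    · exact (hφanti ⟨ha, hab.trans hb1⟩ ⟨ha.trans hab, hb1⟩ hlt).le
  have hφpos : ∀ {a : ℝ}, 0 ≤ a → a < 1 → 0 < φ a := by
    intro a ha ha1
    have := hφanti ⟨ha, ha1.le⟩ ⟨zero_le_one, le_rfl⟩ ha1
    rwa [hφ1] at this
  -- Lp order helpers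
  have hle_of_ae : ∀ {u v : Lp ℝ ∞ μ}, (∀ᵐ x ∂μ, u x ≤ v x) → u ≤ v := by
    intro u v huv
    exact (Lp.coeFn_le u v).1 huv
  have hTmono : ∀ {u v : Lp ℝ ∞ μ}, u ≤ v → ∀ᵐ x ∂μ, (T u) x ≤ (T v) x := by
    intro u v huv
    have h0 : (0 : Lp ℝ ∞ μ) ≤ T v - T u := by
      have h1 := hT (v - u) (by rwa [sub_nonneg])
      rwa [map_sub] at h1
    have h1 := (Lp.coeFn_nonneg (T v - T u)).2 h0
    filter_upwards [h1, Lp.coeFn_sub (T v) (T u)] with x h1x h2x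
    rw [h2x, Pi.sub_apply] at h1x
    have h1x' : (0:ℝ) ≤ (T v) x - (T u) x := h1x
    linarith
  -- the pointwise equilibrium equations
  have heqg : ∀ᵐ x ∂μ, φ (g x) * (T g) x = γ x * g x := by
    have h1 := hF g
    rw [hgeq] at h1
    filter_upwards [h1, Lp.coeFn_zero (E := ℝ) (p := ∞) (μ := μ)] with x hx h0
    rw [h0] at hx
    have hx' : (0:ℝ) = φ (g x) * (T g) x - γ x * g x := hx
    linarith
  have heqh : ∀ᵐ x ∂μ, φ (h x) * (T h) x = γ x * h x := by
    have h1 := hF h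
    rw [hheq] at h1
    filter_upwards [h1, Lp.coeFn_zero (E := ℝ) (p := ∞) (μ := μ)] with x hx h0
    rw [h0] at hx
    have hx' : (0:ℝ) = φ (h x) * (T h) x - γ x * h x := hx
    linarith
  -- common support
  have hsupp' : ∀ᵐ x ∂μ, (g x = 0 ↔ h x = 0) := by
    have h1 := measure_eq_zero_iff_ae_notMem.1 hsupp
    filter_upwards [h1] with x hx
    simp only [Set.mem_symmDiff, Set.mem_setOf_eq, not_or, not_and, not_not] at hx
    tauto
  -- the supremum of admissible ratios
  set Q : Set ℝ :=
    {τ | 0 ≤ τ ∧ τ ≤ 1 ∧ ∀ᵐ x ∂μ, τ * max (g x) (h x) ≤ min (g x) (h x)} with hQdef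
  have h0Q : (0:ℝ) ∈ Q := by
    refine ⟨le_rfl, zero_le_one, ?_⟩
    filter_upwards [hg, hh] with x hx hy
    rw [zero_mul]
    exact le_min (Set.mem_Icc.1 hx).1 (Set.mem_Icc.1 hy).1
  have hQne : Q.Nonempty := ⟨0, h0Q⟩
  have hQbdd : BddAbove Q := ⟨1, fun τ hτ => hτ.2.1⟩
  set t := sSup Q with htdef
  have ht0 : 0 ≤ t := le_csSup hQbdd h0Q
  have ht1 : t ≤ 1 := csSup_le hQne fun τ hτ => hτ.2.1
  have htmem : ∀ᵐ x ∂μ, t * max (g x) (h x) ≤ min (g x) (h x) := by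
    have hseq : ∀ n : ℕ, ∃ τ ∈ Q, t - 1/(n+1) < τ := by
      intro n
      apply exists_lt_of_lt_csSup hQne
      have hpos : (0:ℝ) < 1/((n:ℝ)+1) := by positivity
      linarith
    choose τ hτQ hτlt using hseq
    have hae : ∀ᵐ x ∂μ, ∀ n : ℕ, τ n * max (g x) (h x) ≤ min (g x) (h x) :=
      ae_all_iff.2 fun n => (hτQ n).2.2
    filter_upwards [hae, hg, hh] with x hx hgx hhx
    have hgx' := Set.mem_Icc.1 hgx
    have hhx' := Set.mem_Icc.1 hhx
    have hM1 : max (g x) (h x) ≤ 1 := max_le hgx'.2 hhx'.2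
    have hM0 : 0 ≤ max (g x) (h x) := le_max_of_le_left hgx'.1
    apply hreal_le
    intro ε hε
    obtain ⟨n, hn⟩ := exists_nat_gt (1/ε)
    have h1n : 1/((n:ℝ)+1) < ε := by
      rw [div_lt_iff₀ (by positivity)]
      rw [div_lt_iff₀ hε] at hn
      nlinarith
    have h2 : t - τ n < ε := by
      have := hτlt n
      linarith
    have h3 : (t - τ n) * max (g x) (h x) ≤ ε := by
      calc (t - τ n) * max (g x) (h x) ≤ ε * max (g x) (h x) :=
            mul_le_mul_of_nonneg_right h2.le hM0
        _ ≤ ε * 1 := mul_le_mul_of_nonneg_left hM1 hε.le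
        _ = ε := mul_one ε
    have h4 := hx n
    have h5 : t * max (g x) (h x)
        = (t - τ n) * max (g x) (h x) + τ n * max (g x) (h x) := by ring
    linarith
  -- main case distinction
  rcases eq_or_lt_of_le ht1 with ht1' | ht1'
  · -- t = 1 : conclude
    filter_upwards [htmem] with x hx
    rw [ht1', one_mul] at hx
    have h1 : g x ≤ h x := le_trans (le_trans (le_max_left _ _) hx) (min_le_right _ _)
    have h2 : h x ≤ g x := le_trans (le_trans (le_max_right _ _) hx) (min_le_left _ _)
    exact le_antisymm h1 h2
  · exfalso
    -- auxiliary a.e. inequalities  T g ≥ t T h  and  T h ≥ t T g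
    have hthg : t • h ≤ g := by
      apply hle_of_ae
      filter_upwards [htmem, Lp.coeFn_smul t h] with x hx hs
      rw [hs, Pi.smul_apply, smul_eq_mul]
      calc t * h x ≤ t * max (g x) (h x) :=
            mul_le_mul_of_nonneg_left (le_max_right _ _) ht0
        _ ≤ min (g x) (h x) := hx
        _ ≤ g x := min_le_left _ _
    have hthg' : t • g ≤ h := by
      apply hle_of_ae
      filter_upwards [htmem, Lp.coeFn_smul t g] with x hx hs
      rw [hs, Pi.smul_apply, smul_eq_mul]
      calc t * g x ≤ t * max (g x) (h x) :=
            mul_le_mul_of_nonneg_left (le_max_left _ _) ht0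
        _ ≤ min (g x) (h x) := hx
        _ ≤ h x := min_le_right _ _
    have hTgtTh : ∀ᵐ x ∂μ, t * (T h) x ≤ (T g) x := by
      have h1 := hTmono hthg
      have h2 : T (t • h) = t • T h := map_smul T t h
      rw [h2] at h1
      filter_upwards [h1, Lp.coeFn_smul t (T h)] with x h1x h2x
      rw [h2x, Pi.smul_apply, smul_eq_mul] at h1x
      exact h1x
    have hThtTg : ∀ᵐ x ∂μ, t * (T g) x ≤ (T h) x := by
      have h1 := hTmono hthg'
      have h2 : T (t • g) = t • T g := map_smul T t g
      rw [h2] at h1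
      filter_upwards [h1, Lp.coeFn_smul t (T g)] with x h1x h2x
      rw [h2x, Pi.smul_apply, smul_eq_mul] at h1x
      exact h1x
    -- the pointwise "attained ratio" contradiction
    have hpoint : ∀ (b Ta Tb γx : ℝ), 0 < t → 0 < b → b ≤ 1 → 0 < γx →
        φ (t*b) * Ta = γx * (t*b) → φ b * Tb = γx * b → t * Tb ≤ Ta → False := by
      intro b Ta Tb γx ht' hb0 hb1 hγx hEa hEb hTab
      have hb1' : b < 1 := by
        rcases lt_or_eq_of_le hb1 with h' | h'
        · exact h'
        · exfalso
          rw [h', hφ1, zero_mul] at hEb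
          nlinarith
      have htb : t * b < b := by nlinarith
      have htb0 : 0 ≤ t * b := by positivity
      have hφb : 0 < φ b := hφpos hb0.le hb1'
      have hφtb : 0 < φ (t*b) := hφpos htb0 (htb.trans hb1')
      have hstrict : φ b < φ (t * b) :=
        hφanti ⟨htb0, htb.le.trans hb1⟩ ⟨hb0.le, hb1⟩ htb
      have hTb : Tb = γx * b / φ b := by
        field_simp
        linear_combination hEb
      have hTa : Ta = γx * (t*b) / φ (t*b) := by
        field_simp
        linear_combination hEa
      rw [hTa, hTb] at hTab
      have h1 : γx * (t*b) / φ (t*b) < γx * (t*b) / φ b :=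
        div_lt_div_of_pos_left (by positivity) hφb hstrict
      have h2 : t * (γx * b / φ b) = γx * (t*b) / φ b := by ring
      linarith
    -- the approximating ratios
    set θ : ℕ → ℝ := fun n => t + (1 - t)/(n + 2) with hθdef
    have hθt : ∀ n, t < θ n := by
      intro n
      have hpos : (0:ℝ) < (1 - t)/((n:ℝ) + 2) := by
        apply div_pos (by linarith) (by positivity)
      simp only [hθdef]
      linarith
    have hθ1 : ∀ n, θ n < 1 := by
      intro n
      have h2 : (1 - t)/((n:ℝ)+2) < 1 - t := by
        apply div_lt_self (by linarith)
        have hn0 : (0:ℝ) ≤ (n:ℝ) := Nat.cast_nonneg n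
        linarith
      simp only [hθdef]
      linarith
    have hθ0 : ∀ n, 0 < θ n := fun n => lt_of_le_of_lt ht0 (hθt n)
    have hθanti : Antitone θ := by
      intro m n hmn
      simp only [hθdef]
      have h2 : ((m:ℝ)+2) ≤ ((n:ℝ)+2) := by
        have : (m:ℝ) ≤ (n:ℝ) := by exact_mod_cast hmn
        linarith
      have h3 : (1 - t)/((n:ℝ)+2) ≤ (1 - t)/((m:ℝ)+2) :=
        div_le_div_of_nonneg_left (by linarith) (by positivity) h2
      linarith
    have hθsmall : ∀ ε : ℝ, 0 < ε → ∃ n, θ n < t + ε := by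
      intro ε hε
      obtain ⟨n, hn⟩ := exists_nat_gt ((1-t)/ε)
      refine ⟨n, ?_⟩
      have h2 : (1-t)/((n:ℝ)+2) < ε := by
        rw [div_lt_iff₀ (by positivity)]
        rw [div_lt_iff₀ hε] at hn
        nlinarith
      simp only [hθdef]
      linarith
    -- the bad sets
    have hGm : Measurable (⇑g) := (Lp.stronglyMeasurable g).measurable
    have hHm : Measurable (⇑h) := (Lp.stronglyMeasurable h).measurable
    set B : Set Ω := {x | 0 ≤ g x ∧ g x ≤ 1 ∧ 0 ≤ h x ∧ h x ≤ 1} with hBdef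
    have hBmeas : MeasurableSet B := by
      apply MeasurableSet.inter (measurableSet_le measurable_const hGm)
      apply MeasurableSet.inter (measurableSet_le hGm measurable_const)
      exact (measurableSet_le measurable_const hHm).inter (measurableSet_le hHm measurable_const)
    set A : ℕ → Set Ω :=
      fun n => ({x | g x < θ n * h x} ∪ {x | h x < θ n * g x}) ∩ B with hAdef
    have hAmeas : ∀ n, MeasurableSet (A n) := by
      intro n
      apply MeasurableSet.inter ?_ hBmeas
      exact (measurableSet_lt hGm (measurable_const.mul hHm)).union
        (measurableSet_lt hHm (measurable_const.mul hGm))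
    have hAanti : Antitone A := by
      intro m n hmn x hx
      obtain ⟨hx1, hx2⟩ := hx
      refine ⟨?_, hx2⟩
      have hB' := hx2
      rw [hBdef] at hB'
      obtain ⟨hg0, hg1, hh0, hh1⟩ := hB'
      have hθle : θ n ≤ θ m := hθanti hmn
      rcases hx1 with hx1 | hx1
      · left
        calc g x < θ n * h x := hx1
          _ ≤ θ m * h x := mul_le_mul_of_nonneg_right hθle hh0
      · right
        calc h x < θ n * g x := hx1
          _ ≤ θ m * g x := mul_le_mul_of_nonneg_right hθle hg0
    -- the intersection of the bad sets is null
    have hInull : μ (⋂ n, A n) = 0 := by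
      rw [measure_eq_zero_iff_ae_notMem]
      filter_upwards [hg, hh, hγ, heqg, heqh, hsupp', htmem, hTgtTh, hThtTg]
        with x hgx hhx hγx hEg hEh hsup hmx hTgx hThx
      intro hxI
      rw [Set.mem_iInter] at hxI
      have hgx' := Set.mem_Icc.1 hgx
      have hhx' := Set.mem_Icc.1 hhx
      have hdisj : ∀ n:ℕ, g x < θ n * h x ∨ h x < θ n * g x := by
        intro n
        have hmem := hxI n
        rw [hAdef] at hmem
        simp only [Set.mem_inter_iff, Set.mem_union, Set.mem_setOf_eq] at hmem
        exact hmem.1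
      have hmain2 : g x ≤ t * h x ∨ h x ≤ t * g x := by
        by_cases hcase : ∀ N, ∃ n, N ≤ n ∧ g x < θ n * h x
        · left
          apply hreal_le
          intro ε hε
          obtain ⟨n, hn⟩ := hθsmall ε hε
          obtain ⟨n', hn'1, hn'2⟩ := hcase n
          have h1 : θ n' ≤ θ n := hθanti hn'1
          have h3 : θ n' * h x ≤ θ n * h x := mul_le_mul_of_nonneg_right h1 hhx'.1
          have h2 : θ n * h x ≤ (t + ε) * h x :=
            mul_le_mul_of_nonneg_right hn.le hhx'.1
          nlinarith [hhx'.2]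
        · right
          push_neg at hcase
          obtain ⟨N, hN⟩ := hcase
          apply hreal_le
          intro ε hε
          obtain ⟨n, hn⟩ := hθsmall ε hε
          have hd := hdisj (max n N)
          have hnotg := hN (max n N) (le_max_right _ _)
          have hd2 : h x < θ (max n N) * g x := hd.resolve_left (not_lt.2 hnotg)
          have h1 : θ (max n N) ≤ θ n := hθanti (le_max_left _ _)
          have h3 : θ (max n N) * g x ≤ θ n * g x := mul_le_mul_of_nonneg_right h1 hgx'.1
          have h2 : θ n * g x ≤ (t + ε) * g x :=
            mul_le_mul_of_nonneg_right hn.le hgx'.1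
          nlinarith [hgx'.2]
      rcases hmain2 with hc | hc
      · -- g x ≤ t h x
        have hH0 : 0 < h x := by
          rcases lt_or_eq_of_le hhx'.1 with h' | h'
          · exact h'
          · exfalso
            rw [← h', mul_zero] at hc
            have hg0 : g x = 0 := le_antisymm hc hgx'.1
            have hd0 := hdisj 0
            rw [← h', hg0] at hd0
            simp at hd0
        have hglt : g x < h x := by nlinarith
        have hmm' : t * h x ≤ g x := by
          have h1 := hmx
          rw [max_eq_right hglt.le, min_eq_left hglt.le] at h1
          exact h1
        have hgeq2 : g x = t * h x := le_antisymm hc hmm'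
        rcases eq_or_lt_of_le ht0 with ht0' | ht0'
        · rw [← ht0', zero_mul] at hgeq2
          exact (ne_of_gt hH0) (hsup.1 hgeq2)
        · rw [hgeq2] at hEg
          exact hpoint (h x) ((T g) x) ((T h) x) (γ x) ht0' hH0 hhx'.2 hγx hEg hEh hTgx
      · -- h x ≤ t g x
        have hG0 : 0 < g x := by
          rcases lt_or_eq_of_le hgx'.1 with h' | h'
          · exact h'
          · exfalso
            rw [← h', mul_zero] at hc
            have hh0 : h x = 0 := le_antisymm hc hhx'.1
            have hd0 := hdisj 0
            rw [← h', hh0] at hd0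
            simp at hd0
        have hhlt : h x < g x := by nlinarith
        have hmm' : t * g x ≤ h x := by
          have h1 := hmx
          rw [max_eq_left hhlt.le, min_eq_right hhlt.le] at h1
          exact h1
        have hgeq2 : h x = t * g x := le_antisymm hc hmm'
        rcases eq_or_lt_of_le ht0 with ht0' | ht0'
        · rw [← ht0', zero_mul] at hgeq2
          exact (ne_of_gt hG0) (hsup.2 hgeq2)
        · rw [hgeq2] at hEh
          exact hpoint (g x) ((T h) x) ((T g) x) (γ x) ht0' hG0 hgx'.2 hγx hEh hEg hThx
    -- measures of the bad sets tend to 0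
    have htendA : Tendsto (fun n => μ (A n)) atTop (𝓝 0) := by
      have h1 := tendsto_measure_iInter_atTop
        (fun n => (hAmeas n).nullMeasurableSet) hAanti ⟨0, measure_ne_top μ _⟩
      rw [hInull] at h1
      exact h1
    -- exponent facts
    have hp0 : p ≠ 0 := by
      intro hp
      rw [hp] at hp1
      exact (not_lt_of_ge zero_le) hp1
    have hpR1 : 1 < p.toReal := by
      rw [← ENNReal.toReal_one]
      exact (ENNReal.toReal_lt_toReal (by simp) hp2).2 hp1
    have hpR0 : 0 < p.toReal := lt_trans one_pos hpR1
    -- choose a sufficiently deep bad set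
    have hb0 : (0:ℝ≥0∞) < ((2*(C+1))⁻¹) ^ p.toReal := by
      apply ENNReal.rpow_pos
      · rw [ENNReal.inv_pos]
        exact ENNReal.mul_ne_top (by simp) (by simp [hC])
      · rw [ne_eq, ENNReal.inv_eq_top]
        simp
    obtain ⟨n, hn⟩ : ∃ n, μ (A n) < ((2*(C+1))⁻¹) ^ p.toReal :=
      (htendA.eventually_lt_const hb0).exists
    have hsmall : C * μ (A n) ^ (1/p.toReal) < 1 := by
      have h1 : μ (A n) ^ (1/p.toReal) < (((2*(C+1))⁻¹) ^ p.toReal) ^ (1/p.toReal) :=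
        ENNReal.rpow_lt_rpow hn (by positivity)
      rw [← ENNReal.rpow_mul, mul_one_div, div_self (ne_of_gt hpR0), ENNReal.rpow_one] at h1
      calc C * μ (A n) ^ (1/p.toReal) ≤ C * (2*(C+1))⁻¹ :=
            mul_le_mul_right h1.le C
        _ < 1 := by
            have hbne0 : (2*(C+1)) ≠ 0 := by simp
            have hbnetop : (2*(C+1)) ≠ ∞ := ENNReal.mul_ne_top (by simp) (by simp [hC])
            rw [← div_eq_mul_inv]
            rw [ENNReal.div_lt_iff (Or.inl hbne0) (Or.inl hbnetop), one_mul]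
            have h2 : 2*(C+1) = C + (C + 2) := by ring
            rw [h2]
            exact ENNReal.lt_add_right hC (by simp)
    set θ' := θ n with hθ'def
    have hθ'0 : 0 < θ' := hθ0 n
    have hθ'1 : θ' < 1 := hθ1 n
    -- the defect function d
    set d : Lp ℝ ∞ μ := Lp.posPart (θ' • h - g) + Lp.posPart (θ' • g - h) with hddef
    have hdcoe : ⇑d =ᵐ[μ]
        fun x => max (θ' * h x - g x) 0 + max (θ' * g x - h x) 0 := by
      rw [hddef]
      filter_upwards [Lp.coeFn_add (Lp.posPart (θ' • h - g)) (Lp.posPart (θ' • g - h)),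
        Lp.coeFn_posPart (θ' • h - g), Lp.coeFn_posPart (θ' • g - h),
        Lp.coeFn_sub (θ' • h) g, Lp.coeFn_sub (θ' • g) h,
        Lp.coeFn_smul θ' h, Lp.coeFn_smul θ' g] with x h1 h2 h3 h4 h5 h6 h7
      rw [h1, Pi.add_apply, h2, h3, h4, h5, Pi.sub_apply, Pi.sub_apply, h6, h7,
        Pi.smul_apply, Pi.smul_apply, smul_eq_mul, smul_eq_mul]
    have hd_nonneg : (0 : Lp ℝ ∞ μ) ≤ d := by
      apply hle_of_ae
      filter_upwards [hdcoe, Lp.coeFn_zero (E := ℝ) (p := ∞) (μ := μ)] with x h1 h2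
      rw [h1, h2]
      have := le_max_right (θ' * h x - g x) 0
      have := le_max_right (θ' * g x - h x) 0
      simp only [Pi.zero_apply]
      positivity
    have hTd0ae : ∀ᵐ x ∂μ, 0 ≤ (T d) x := by
      have h0 := hT d hd_nonneg
      have h1 := (Lp.coeFn_nonneg (T d)).2 h0
      filter_upwards [h1] with x hx
      exact hx
    -- T applied to the two parts of d
    have hsub1 : θ' • h - g ≤ d := by
      apply hle_of_ae
      filter_upwards [hdcoe, Lp.coeFn_sub (θ' • h) g, Lp.coeFn_smul θ' h] with x h1 h2 h3
      rw [h1, h2, Pi.sub_apply, h3, Pi.smul_apply, smul_eq_mul]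
      exact (le_max_left _ _).trans (le_add_of_nonneg_right (le_max_right _ _))
    have hsub2 : θ' • g - h ≤ d := by
      apply hle_of_ae
      filter_upwards [hdcoe, Lp.coeFn_sub (θ' • g) h, Lp.coeFn_smul θ' g] with x h1 h2 h3
      rw [h1, h2, Pi.sub_apply, h3, Pi.smul_apply, smul_eq_mul]
      exact (le_max_left _ _).trans (le_add_of_nonneg_left (le_max_right _ _))
    have hT1 : ∀ᵐ x ∂μ, θ' * (T h) x - (T g) x ≤ (T d) x := by
      have h1 := hTmono hsub1
      have h2 : T (θ' • h - g) = θ' • T h - T g := by rw [map_sub, _root_.map_smul]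
      rw [h2] at h1
      filter_upwards [h1, Lp.coeFn_sub (θ' • T h) (T g), Lp.coeFn_smul θ' (T h)]
        with x h1x h2x h3x
      rw [h2x, Pi.sub_apply, h3x, Pi.smul_apply, smul_eq_mul] at h1x
      exact h1x
    have hT2 : ∀ᵐ x ∂μ, θ' * (T g) x - (T h) x ≤ (T d) x := by
      have h1 := hTmono hsub2
      have h2 : T (θ' • g - h) = θ' • T g - T h := by rw [map_sub, _root_.map_smul]
      rw [h2] at h1
      filter_upwards [h1, Lp.coeFn_sub (θ' • T g) (T h), Lp.coeFn_smul θ' (T g)]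
        with x h1x h2x h3x
      rw [h2x, Pi.sub_apply, h3x, Pi.smul_apply, smul_eq_mul] at h1x
      exact h1x
    -- the pointwise key inequality
    have hkey : ∀ (a b Ta Tb γx : ℝ), 0 ≤ a → 0 < b → b < 1 → 0 < γx →
        φ a * Ta = γx * a → φ b * Tb = γx * b → a < θ' * b →
        γx * (θ' * b - a) ≤ θ' * Tb - Ta := by
      intro a b Ta Tb γx ha0 hb0 hb1 hγx hEa hEb hab
      have hθb0 : 0 ≤ θ' * b := by positivity
      have hθbb : θ' * b ≤ b := by nlinarith
      have hθb1 : θ' * b < 1 := lt_of_le_of_lt hθbb hb1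
      have ha1 : a < 1 := hab.trans hθb1
      have hφa : 0 < φ a := hφpos ha0 ha1
      have hφb : 0 < φ b := hφpos hb0.le hb1
      have hab' : a ≤ b := hab.le.trans hθbb
      have hφba : φ b ≤ φ a := hφle ha0 hab' hb1.le
      have hφa1 : φ a ≤ 1 := by
        rw [← hφ0]
        exact hφle le_rfl ha0 ha1.le
      have hTa : Ta = γx * a / φ a := by
        field_simp
        linear_combination hEa
      have hTb : Tb = γx * b / φ b := by
        field_simp
        linear_combination hEb
      rw [hTa, hTb]
      have c3 : γx * (θ' * b) / φ a ≤ γx * (θ' * b) / φ b :=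
        div_le_div_of_nonneg_left (by positivity) hφb hφba
      have c4 : γx * (θ' * b - a) ≤ γx * (θ' * b - a) / φ a := by
        rw [le_div_iff₀ hφa]
        have hX : 0 ≤ γx * (θ' * b - a) := mul_nonneg hγx.le (sub_nonneg.2 hab.le)
        nlinarith [mul_nonneg hX (sub_nonneg.2 hφa1)]
      have c5 : γx * (θ' * b - a) / φ a = γx * (θ' * b) / φ a - γx * a / φ a := by ring
      have c6 : θ' * (γx * b / φ b) = γx * (θ' * b) / φ b := by ring
      linarith
    -- main a.e. inequality:  γ d ≤ T d  and  d = 0 off A n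
    have hmain : ∀ᵐ x ∂μ, γ x * d x ≤ (T d) x ∧ (x ∉ A n → γ x * d x = 0)
        ∧ 0 ≤ d x ∧ d x ≤ 2 := by
      filter_upwards [hdcoe, hg, hh, hγ, heqg, heqh, hT1, hT2, hTd0ae]
        with x hdx hgx hhx hγx hEg hEh hT1x hT2x hTd0x
      have hgx' := Set.mem_Icc.1 hgx
      have hhx' := Set.mem_Icc.1 hhx
      have hgne : g x ≠ 0 → g x < 1 := by
        intro hne
        rcases lt_or_eq_of_le hgx'.2 with h' | h'
        · exact h'
        · exfalso
          rw [h', hφ1, zero_mul, mul_one] at hEg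
          exact (ne_of_gt hγx) hEg.symm
      have hhne : h x ≠ 0 → h x < 1 := by
        intro hne
        rcases lt_or_eq_of_le hhx'.2 with h' | h'
        · exact h'
        · exfalso
          rw [h', hφ1, zero_mul, mul_one] at hEh
          exact (ne_of_gt hγx) hEh.symm
      have hd2 : d x ≤ 2 := by
        rw [hdx]
        have e1 : max (θ' * h x - g x) 0 ≤ 1 := by
          apply max_le _ zero_le_one
          nlinarith [hhx'.2, hgx'.1]
        have e2 : max (θ' * g x - h x) 0 ≤ 1 := by
          apply max_le _ zero_le_one
          nlinarith [hgx'.2, hhx'.1]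
        linarith
      have hd0' : 0 ≤ d x := by
        rw [hdx]
        have := le_max_right (θ' * h x - g x) 0
        have := le_max_right (θ' * g x - h x) 0
        linarith
      refine ⟨?_, ?_, hd0', hd2⟩
      · -- γ d ≤ T d
        rw [hdx]
        rcases le_or_gt (θ' * h x - g x) 0 with h1 | h1
        · rcases le_or_gt (θ' * g x - h x) 0 with h2 | h2
          · rw [max_eq_right h1, max_eq_right h2]
            simpa using hTd0x
          · rw [max_eq_right h1, max_eq_left h2.le, zero_add]
            have hG0 : 0 < g x := by nlinarith
            have hG1 : g x < 1 := hgne (ne_of_gt hG0)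
            have := hkey (h x) (g x) ((T h) x) ((T g) x) (γ x)
              hhx'.1 hG0 hG1 hγx hEh hEg (by linarith)
            linarith
        · have h2 : θ' * g x - h x ≤ 0 := by
            have ha : θ' * g x < θ' * (θ' * h x) :=
              mul_lt_mul_of_pos_left (by linarith) hθ'0
            have hb : θ' * (θ' * h x) ≤ h x := by nlinarith [hhx'.1]
            linarith
          rw [max_eq_left h1.le, max_eq_right h2, add_zero]
          have hH0 : 0 < h x := by nlinarith
          have hH1 : h x < 1 := hhne (ne_of_gt hH0)
          have := hkey (g x) (h x) ((T g) x) ((T h) x) (γ x)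
            hgx'.1 hH0 hH1 hγx hEg hEh (by linarith)
          linarith
      · -- vanishing off A n
        intro hxA
        have hxB : x ∈ B := by
          rw [hBdef]
          exact ⟨hgx'.1, hgx'.2, hhx'.1, hhx'.2⟩
        have hnot : ¬ (g x < θ' * h x ∨ h x < θ' * g x) := by
          intro hor
          apply hxA
          rw [hAdef]
          refine ⟨?_, hxB⟩
          simpa only [Set.mem_union, Set.mem_setOf_eq] using hor
        push_neg at hnot
        rw [hdx, max_eq_right (by linarith [hnot.1]), max_eq_right (by linarith [hnot.2])]
        simp
    -- the norm contraction
    set N := eLpNorm (fun x => γ x * d x) p μ with hNdef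
    have hbound : (‖T d‖₊ : ℝ≥0∞) ≤ C * N := hTbound d
    have hTdnorm : eLpNormEssSup (⇑(T d)) μ ≤ C * N := by
      rw [← eLpNorm_exponent_top]
      have h1 : (‖T d‖₊ : ℝ≥0∞) = eLpNorm (⇑(T d)) ∞ μ := by
        rw [Lp.nnnorm_def, ENNReal.coe_toNNReal (Lp.eLpNorm_ne_top _)]
      rw [← h1]
      exact hbound
    have hptbound : ∀ᵐ x ∂μ,
        (‖γ x * d x‖₊ : ℝ≥0∞) ≤ Set.indicator (A n) (fun _ => C * N) x := by
      filter_upwards [hmain, ae_le_eLpNormEssSup (f := ⇑(T d)) (μ := μ), hγ]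
        with x hx hTdx hγx
      by_cases hxA : x ∈ A n
      · rw [Set.indicator_of_mem hxA]
        have hnn : 0 ≤ γ x * d x := mul_nonneg hγx.le hx.2.2.1
        calc (‖γ x * d x‖₊ : ℝ≥0∞) = ENNReal.ofReal (γ x * d x) :=
              Real.enorm_eq_ofReal hnn
          _ ≤ ENNReal.ofReal ((T d) x) := ENNReal.ofReal_le_ofReal hx.1
          _ ≤ (‖(T d) x‖₊ : ℝ≥0∞) := Real.ofReal_le_enorm _
          _ ≤ eLpNormEssSup (⇑(T d)) μ := hTdx
          _ ≤ C * N := hTdnorm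
      · rw [Set.indicator_of_notMem hxA, hx.2.1 hxA]
        simp
    have hNle : N ≤ (C * N) * μ (A n) ^ (1/p.toReal) := by
      have hNform : N = (∫⁻ x, (‖γ x * d x‖₊ : ℝ≥0∞) ^ p.toReal ∂μ) ^ (1/p.toReal) := by
        rw [hNdef]
        exact eLpNorm_eq_lintegral_rpow_enorm_toReal hp0 hp2
      have hint : (∫⁻ x, (‖γ x * d x‖₊ : ℝ≥0∞) ^ p.toReal ∂μ)
          ≤ (C*N)^p.toReal * μ (A n) := by
        have hle : (∫⁻ x, (‖γ x * d x‖₊ : ℝ≥0∞) ^ p.toReal ∂μ)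
            ≤ ∫⁻ x, Set.indicator (A n) (fun _ => (C*N)^p.toReal) x ∂μ := by
          apply lintegral_mono_ae
          filter_upwards [hptbound] with x hx
          by_cases hxA : x ∈ A n
          · rw [Set.indicator_of_mem hxA]
            rw [Set.indicator_of_mem hxA] at hx
            exact ENNReal.rpow_le_rpow hx hpR0.le
          · rw [Set.indicator_of_notMem hxA]
            rw [Set.indicator_of_notMem hxA] at hx
            have h0 : (‖γ x * d x‖₊ : ℝ≥0∞) = 0 := le_antisymm hx zero_le
            rw [h0, ENNReal.zero_rpow_of_pos hpR0]
        rw [lintegral_indicator_const (hAmeas n)] at hle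
        exact hle
      calc N = (∫⁻ x, (‖γ x * d x‖₊ : ℝ≥0∞) ^ p.toReal ∂μ) ^ (1/p.toReal) := hNform
        _ ≤ ((C*N)^p.toReal * μ (A n)) ^ (1/p.toReal) :=
            ENNReal.rpow_le_rpow hint (by positivity)
        _ = (C*N) * μ (A n) ^ (1/p.toReal) := by
            rw [ENNReal.mul_rpow_of_nonneg _ _ (by positivity), ← ENNReal.rpow_mul,
              mul_one_div, div_self (ne_of_gt hpR0), ENNReal.rpow_one]
    have hNtop : N ≠ ∞ := by
      have hγbd : ∀ᵐ x ∂μ, (‖γ x‖₊ : ℝ≥0∞) ≤ (‖γ‖₊ : ℝ≥0∞) := by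
        have h1 : (‖γ‖₊ : ℝ≥0∞) = eLpNorm (⇑γ) ∞ μ := by
          rw [Lp.nnnorm_def, ENNReal.coe_toNNReal (Lp.eLpNorm_ne_top _)]
        rw [h1, eLpNorm_exponent_top]
        exact ae_le_eLpNormEssSup
      have hbd : ∀ᵐ x ∂μ, ‖γ x * d x‖ ≤ ‖γ‖ * 2 := by
        filter_upwards [hmain, hγbd] with x hx hγx
        have h2 : ‖γ x‖ ≤ ‖γ‖ := by
          have := hγx
          rw [ENNReal.coe_le_coe] at this
          exact_mod_cast this
        have h3 : ‖d x‖ ≤ 2 := by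
          rw [Real.norm_eq_abs, abs_of_nonneg hx.2.2.1]
          exact hx.2.2.2
        calc ‖γ x * d x‖ = ‖γ x‖ * ‖d x‖ := norm_mul _ _
          _ ≤ ‖γ‖ * 2 := by
              apply mul_le_mul h2 h3 (norm_nonneg _) (norm_nonneg _)
      have h4 := eLpNorm_le_of_ae_bound (p := p) (μ := μ) hbd
      apply ne_top_of_le_ne_top _ h4
      apply ENNReal.mul_ne_top
      · exact ENNReal.rpow_ne_top_of_nonneg (by positivity) (measure_ne_top μ _)
      · exact ENNReal.ofReal_ne_top
    have hN0 : N = 0 := by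
      by_contra hN0
      have h1 : N ≤ N * (C * μ (A n) ^ (1/p.toReal)) := by
        calc N ≤ (C*N) * μ (A n) ^ (1/p.toReal) := hNle
          _ = N * (C * μ (A n) ^ (1/p.toReal)) := by ring
      have h2 : N * (C * μ (A n) ^ (1/p.toReal)) < N * 1 :=
        (ENNReal.mul_lt_mul_iff_right hN0 hNtop).2 hsmall
      rw [mul_one] at h2
      exact absurd (lt_of_le_of_lt h1 h2) (lt_irrefl N)
    have hzero : (fun x => γ x * d x) =ᵐ[μ] 0 := by
      have hms : AEStronglyMeasurable (fun x => γ x * d x) μ :=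
        ((Lp.stronglyMeasurable γ).mul (Lp.stronglyMeasurable d)).aestronglyMeasurable
      exact (eLpNorm_eq_zero_iff hms hp0).1 hN0
    -- conclude θ' ∈ Q, contradiction
    have hθQ : θ' ∈ Q := by
      refine ⟨(hθ'0).le, (hθ'1).le, ?_⟩
      filter_upwards [hzero, hγ, hdcoe] with x h0 hγx hdx
      have hd0 : d x = 0 := by
        have h0' : γ x * d x = 0 := h0
        rcases mul_eq_zero.1 h0' with h' | h'
        · exact absurd h' (ne_of_gt hγx)
        · exact h'
      rw [hdx] at hd0
      have e1 : θ' * h x - g x ≤ max (θ' * h x - g x) 0 := le_max_left _ _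
      have e2 : θ' * g x - h x ≤ max (θ' * g x - h x) 0 := le_max_left _ _
      have e3 : 0 ≤ max (θ' * h x - g x) 0 := le_max_right _ _
      have e4 : 0 ≤ max (θ' * g x - h x) 0 := le_max_right _ _
      have h1 : θ' * h x ≤ g x := by linarith
      have h2 : θ' * g x ≤ h x := by linarith
      rcases le_total (g x) (h x) with hc | hc
      · rw [max_eq_right hc, min_eq_left hc]
        exact h1
      · rw [max_eq_left hc, min_eq_right hc]
        exact h2
    have hcontra : θ' ≤ t := le_csSup hQbdd hθQ
    exact absurd hcontra (not_le.2 (hθt n))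
end

section
/- Under Assumption 2, if $g\in\Delta$ is an equilibrium of the SIS model ($\varphi(g)Tg = \gamma g$), then $\operatorname{supp}(g)$ is a $T$-invariant set, i.e. $M_{\operatorname{supp}(g)^c}\, T\, M_{\operatorname{supp}(g)} = 0$. -/
open MeasureTheory ENNReal Filter

/-- For `f` in `L^∞`, a.e. `‖f x‖ ≤ ‖f‖`. -/
lemma ae_norm_le_norm_of_linfty {Ω : Type*} [MeasurableSpace Ω] {μ : Measure Ω}
    (f : Lp ℝ ∞ μ) : ∀ᵐ x ∂μ, ‖f x‖ ≤ ‖f‖ := by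
  filter_upwards [ae_le_eLpNormEssSup (f := ⇑f) (μ := μ)] with x hx
  have h2 : eLpNormEssSup (⇑f) μ = (‖f‖₊ : ℝ≥0∞) := by
    rw [← eLpNorm_exponent_top, ← Lp.enorm_def, enorm_eq_nnnorm]
  rw [h2, enorm_eq_nnnorm, ENNReal.coe_le_coe] at hx
  exact_mod_cast hx

/-- **The support of an equilibrium is invariant** (Assumption 2).
If `g ∈ Δ` is an equilibrium of the SIS model, i.e. `φ(g)·Tg = γ·g` a.e., then
`supp(g)` is a `T`-invariant set: `M_{supp(g)ᶜ} T M_{supp(g)} = 0`, i.e. `T` maps functions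
supported in `supp(g)` to functions vanishing a.e. outside `supp(g)`. -/
theorem support_of_equilibrium_invariant
    {Ω : Type*} [MeasurableSpace Ω] {μ : Measure Ω} [IsFiniteMeasure μ] (hμ : μ ≠ 0)
    {p : ℝ≥0∞} [Fact (1 ≤ p)] (hp1 : 1 < p) (hp2 : p ≠ ∞)
    (T : Lp ℝ ∞ μ →L[ℝ] Lp ℝ ∞ μ) (hT : ∀ f : Lp ℝ ∞ μ, 0 ≤ f → 0 ≤ T f)
    (γ : Lp ℝ ∞ μ) (hγ : ∀ᵐ x ∂μ, 0 < γ x)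
    (C : ℝ≥0∞) (hC : C ≠ ∞)
    (hTbound : ∀ f : Lp ℝ ∞ μ,
      (‖T f‖₊ : ℝ≥0∞) ≤ C * eLpNorm (fun x => γ x * f x) p μ)
    (φ : ℝ → ℝ) (hφlip : LocallyLipschitz φ) (hφanti : StrictAntiOn φ (Set.Icc 0 1))
    (hφnn : ∀ r ∈ Set.Icc (0:ℝ) 1, 0 ≤ φ r) (hφ0 : φ 0 = 1) (hφ1 : φ 1 = 0)
    (g : Lp ℝ ∞ μ) (hg : ∀ᵐ x ∂μ, g x ∈ Set.Icc (0:ℝ) 1)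
    (heq : ∀ᵐ x ∂μ, φ (g x) * (T g) x = γ x * g x) :
    ∀ f : Lp ℝ ∞ μ, (∀ᵐ x ∂μ, x ∉ {y | g y ≠ 0} → f x = 0) →
      ∀ᵐ x ∂μ, x ∉ {y | g y ≠ 0} → (T f) x = 0 := by
  intro f hf
  have hp0 : p ≠ 0 := (zero_lt_one.trans hp1).ne'
  -- Step A: Tg vanishes a.e. where g = 0
  have hTg0 : ∀ᵐ x ∂μ, g x = 0 → (T g) x = 0 := by
    filter_upwards [heq] with x hx hgx
    rw [hgx, hφ0, one_mul, mul_zero] at hx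
    exact hx
  -- monotonicity of T
  have hmono : ∀ u v : Lp ℝ ∞ μ, u ≤ v → T u ≤ T v := by
    intro u v huv
    have h := hT (v - u) (sub_nonneg.mpr huv)
    rwa [map_sub, sub_nonneg] at h
  -- key: anything squeezed between -(c•g) and c•g is mapped to 0 a.e. on {g = 0}
  have key : ∀ (c : ℝ) (u : Lp ℝ ∞ μ), -(c • g) ≤ u → u ≤ c • g →
      ∀ᵐ x ∂μ, g x = 0 → (T u) x = 0 := by
    intro c u h1 h2
    have u1 : T u ≤ c • T g := by
      have := hmono u (c • g) h2
      rwa [_root_.map_smul] at this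
    have u2 : -(c • T g) ≤ T u := by
      have := hmono (-(c • g)) u h1
      rwa [map_neg, _root_.map_smul] at this
    filter_upwards [(Lp.coeFn_le _ _).2 u1, (Lp.coeFn_le _ _).2 u2,
      Lp.coeFn_smul c (T g), Lp.coeFn_neg (c • T g), hTg0] with x hx1 hx2 hsm hneg hTg hgx
    have h0 : (c • T g) x = 0 := by
      rw [hsm]
      simp [hTg hgx]
    rw [h0] at hx1
    rw [hneg] at hx2
    simp only [Pi.neg_apply, h0, neg_zero] at hx2
    linarith
  set M : ℝ := ‖f‖ with hMdef
  have hM0 : 0 ≤ M := norm_nonneg f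
  set c : ℕ → ℝ := fun n => ((n : ℝ) + 1) * M with hcdef
  have hcnn : ∀ n, 0 ≤ c n := fun n => by positivity
  set h : ℕ → Lp ℝ ∞ μ := fun n => (f ⊓ (c n • g)) ⊔ (-(c n • g)) with hhdef
  -- 0 ≤ c n • g
  have hcg : ∀ n, 0 ≤ c n • g := by
    intro n
    rw [← Lp.coeFn_nonneg]
    filter_upwards [Lp.coeFn_smul (c n) g, hg] with x h1 h2
    rw [h1]
    simpa using mul_nonneg (hcnn n) h2.1
  have hle1 : ∀ n, -(c n • g) ≤ h n := fun n => le_sup_right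
  have hle2 : ∀ n, h n ≤ c n • g := fun n => sup_le inf_le_right (neg_le_self (hcg n))
  -- pointwise description of h n
  have hcoe : ∀ n, ∀ᵐ x ∂μ, (h n) x = max (min (f x) (c n * g x)) (-(c n * g x)) := by
    intro n
    filter_upwards [Lp.coeFn_sup (f ⊓ (c n • g)) (-(c n • g)), Lp.coeFn_inf f (c n • g),
      Lp.coeFn_neg (c n • g), Lp.coeFn_smul (c n) g] with x h1 h2 h3 h4
    have : (h n) x = (f ⊓ (c n • g)) x ⊔ (-(c n • g)) x := h1
    rw [this, h2, h3]
    simp only [Pi.inf_apply, Pi.sup_apply, Pi.neg_apply]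
    rw [h4]
    simp only [Pi.smul_apply, smul_eq_mul]
  -- measurable representative of g
  obtain ⟨g', hg'meas, hg'eq⟩ : ∃ g' : Ω → ℝ, StronglyMeasurable g' ∧ ⇑g =ᵐ[μ] g' :=
    ⟨(Lp.aestronglyMeasurable g).mk _, (Lp.aestronglyMeasurable g).stronglyMeasurable_mk,
      (Lp.aestronglyMeasurable g).ae_eq_mk⟩
  set B : ℕ → Set Ω := fun n => g' ⁻¹' Set.Ioo 0 (1 / ((n : ℝ) + 1)) with hBdef
  have hBmeas : ∀ n, MeasurableSet (B n) := fun n =>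
    hg'meas.measurable measurableSet_Ioo
  have hBanti : Antitone B := by
    intro n m hnm x hx
    obtain ⟨hx1, hx2⟩ := hx
    refine ⟨hx1, lt_of_lt_of_le hx2 ?_⟩
    apply one_div_le_one_div_of_le (by positivity)
    have : (n : ℝ) ≤ m := by exact_mod_cast hnm
    linarith
  have hInter : ⋂ n, B n = ∅ := by
    ext x
    simp only [Set.mem_iInter, Set.mem_empty_iff_false, iff_false]
    intro hx
    obtain ⟨hpos, -⟩ := hx 0
    obtain ⟨n, hn⟩ := exists_nat_one_div_lt hpos
    exact absurd (hx n).2 (not_lt.mpr hn.le)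
  have hμB : Filter.Tendsto (fun n => μ (B n)) atTop (nhds 0) := by
    have hten := tendsto_measure_iInter_atTop (μ := μ) (s := B)
      (fun n => (hBmeas n).nullMeasurableSet) hBanti ⟨0, measure_ne_top μ _⟩
    rw [hInter, measure_empty] at hten
    exact hten
  -- pointwise bound on f - h n
  have hdiff : ∀ n, ∀ᵐ x ∂μ,
      |f x - (h n) x| ≤ Set.indicator (B n) (fun _ => 2 * M) x := by
    intro n
    filter_upwards [hcoe n, hg'eq, hg, ae_norm_le_norm_of_linfty f, hf]
      with x hhx hg'x hgx hfx hf0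
    rw [Real.norm_eq_abs] at hfx
    have hfx' := abs_le.1 hfx
    by_cases hxB : x ∈ B n
    · rw [Set.indicator_of_mem hxB]
      obtain ⟨hpos, hlt⟩ : 0 < g' x ∧ g' x < 1 / ((n : ℝ) + 1) := hxB
      rw [← hg'x] at hpos hlt
      have hn1 : (0 : ℝ) < (n : ℝ) + 1 := by positivity
      have hgle : g x * ((n : ℝ) + 1) < 1 := by
        rw [← lt_div_iff₀ hn1]
        exact hlt
      have hcgnn : 0 ≤ c n * g x := mul_nonneg (hcnn n) hpos.le
      have hcgle : c n * g x ≤ M := by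
        have : c n * g x = M * (g x * ((n : ℝ) + 1)) := by rw [hcdef]; ring
        rw [this]
        calc M * (g x * ((n : ℝ) + 1)) ≤ M * 1 :=
              mul_le_mul_of_nonneg_left hgle.le hM0
          _ = M := mul_one M
      have hup : (h n) x ≤ M := by
        rw [hhx]
        apply max_le
        · exact le_trans (min_le_left _ _) hfx'.2
        · linarith
      have hlo : -M ≤ (h n) x := by
        rw [hhx]
        exact le_trans (by linarith) (le_max_right _ _)
      rw [abs_le]
      constructor <;> linarith
    · rw [Set.indicator_of_notMem hxB]
      have heqfh : f x = (h n) x := by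
        by_cases hgx0 : g x = 0
        · have hfz : f x = 0 := hf0 (not_not.mpr hgx0)
          rw [hhx, hgx0, hfz]
          norm_num
        · have hgpos : 0 < g x := lt_of_le_of_ne hgx.1 (Ne.symm hgx0)
          have hge : 1 / ((n : ℝ) + 1) ≤ g x := by
            by_contra hlt
            push_neg at hlt
            exact hxB ⟨by rwa [← hg'x], by rwa [← hg'x]⟩
          have hn1 : (0 : ℝ) < (n : ℝ) + 1 := by positivity
          have h1le : 1 ≤ g x * ((n : ℝ) + 1) := by
            rw [← div_le_iff₀ hn1]
            simpa [one_div] using hge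
          have hMle : M ≤ c n * g x := by
            have hcge : c n * g x = M * (g x * ((n : ℝ) + 1)) := by rw [hcdef]; ring
            rw [hcge]
            calc M = M * 1 := (mul_one M).symm
              _ ≤ M * (g x * ((n : ℝ) + 1)) := mul_le_mul_of_nonneg_left h1le hM0
          rw [hhx]
          rw [min_eq_left (le_trans hfx'.2 hMle), max_eq_left (by linarith)]
      rw [heqfh, sub_self, abs_zero]
  set K : ℝ := ‖γ‖ * (2 * M) with hKdef
  have hK0 : 0 ≤ K := mul_nonneg (norm_nonneg _) (by linarith)
  -- eLpNorm bound
  have hsn : ∀ n, eLpNorm (fun x => γ x * ((f : Ω → ℝ) x - (h n) x)) p μ ≤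
      (‖K‖₊ : ℝ≥0∞) * μ (B n) ^ (1 / p.toReal) := by
    intro n
    have hb : ∀ᵐ x ∂μ, ‖γ x * (f x - (h n) x)‖ ≤
        ‖Set.indicator (B n) (fun _ => K) x‖ := by
      filter_upwards [hdiff n, ae_norm_le_norm_of_linfty γ] with x h1 h2
      rw [Real.norm_eq_abs, abs_mul]
      rw [Real.norm_eq_abs] at h2
      by_cases hxB : x ∈ B n
      · rw [Set.indicator_of_mem hxB, Real.norm_eq_abs]
        rw [Set.indicator_of_mem hxB] at h1
        calc |γ x| * |f x - (h n) x| ≤ ‖γ‖ * (2 * M) :=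
              mul_le_mul h2 h1 (abs_nonneg _) (norm_nonneg _)
          _ = K := hKdef.symm
          _ ≤ |K| := le_abs_self _
      · rw [Set.indicator_of_notMem hxB] at h1 ⊢
        have hz : |f x - (h n) x| = 0 := le_antisymm h1 (abs_nonneg _)
        rw [hz, mul_zero, norm_zero]
    calc eLpNorm (fun x => γ x * ((f : Ω → ℝ) x - (h n) x)) p μ
        ≤ eLpNorm (Set.indicator (B n) fun _ => K) p μ := eLpNorm_mono_ae hb
      _ = (‖K‖₊ : ℝ≥0∞) * μ (B n) ^ (1 / p.toReal) :=
          eLpNorm_indicator_const (hBmeas n) hp0 hp2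
  -- main norm estimate
  have hleD : ∀ n, (‖T (f - h n)‖₊ : ℝ≥0∞) ≤
      (C * (‖K‖₊ : ℝ≥0∞)) * μ (B n) ^ (1 / p.toReal) := by
    intro n
    calc (‖T (f - h n)‖₊ : ℝ≥0∞)
        ≤ C * eLpNorm (fun x => γ x * (f - h n) x) p μ := hTbound _
      _ = C * eLpNorm (fun x => γ x * ((f : Ω → ℝ) x - (h n) x)) p μ := by
          congr 1
          apply eLpNorm_congr_ae
          filter_upwards [Lp.coeFn_sub f (h n)] with x hx
          rw [hx]
          simp [Pi.sub_apply]
      _ ≤ C * ((‖K‖₊ : ℝ≥0∞) * μ (B n) ^ (1 / p.toReal)) := mul_le_mul_right (hsn n) C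
      _ = (C * (‖K‖₊ : ℝ≥0∞)) * μ (B n) ^ (1 / p.toReal) := (mul_assoc _ _ _).symm
  have hexp : 0 < 1 / p.toReal := by
    have : 0 < p.toReal := ENNReal.toReal_pos hp0 hp2
    positivity
  have hDlim : Filter.Tendsto
      (fun n => (C * (‖K‖₊ : ℝ≥0∞)) * μ (B n) ^ (1 / p.toReal)) atTop (nhds 0) :=
    (ENNReal.tendsto_const_mul_rpow_nhds_zero_of_pos
      (ENNReal.mul_ne_top hC ENNReal.coe_ne_top) hexp).comp hμB
  have hnlim : Filter.Tendsto (fun n => (‖T (f - h n)‖₊ : ℝ≥0∞)) atTop (nhds 0) :=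
    tendsto_of_tendsto_of_tendsto_of_le_of_le tendsto_const_nhds hDlim
      (fun n => zero_le) hleD
  have hrlim : Filter.Tendsto (fun n => ‖T (f - h n)‖) atTop (nhds 0) := by
    have h1 : Filter.Tendsto (fun n => ‖T (f - h n)‖₊) atTop (nhds 0) :=
      ENNReal.tendsto_coe.mp (by simpa using hnlim)
    have h2 := NNReal.tendsto_coe.mpr h1
    simpa using h2
  -- a.e. facts
  have A1 : ∀ n, ∀ᵐ x ∂μ, g x = 0 → (T (h n)) x = 0 :=
    fun n => key (c n) (h n) (hle1 n) (hle2 n)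
  have A2 : ∀ n, ∀ᵐ x ∂μ, ‖(T f) x - (T (h n)) x‖ ≤ ‖T (f - h n)‖ := by
    intro n
    have hsub : ⇑(T (f - h n)) =ᵐ[μ] ⇑(T f) - ⇑(T (h n)) := by
      rw [map_sub]
      exact Lp.coeFn_sub _ _
    filter_upwards [ae_norm_le_norm_of_linfty (T (f - h n)), hsub] with x h1 h2
    rw [h2] at h1
    simpa [Pi.sub_apply] using h1
  filter_upwards [ae_all_iff.2 A1, ae_all_iff.2 A2] with x h1 h2 hx
  have hgx : g x = 0 := not_not.mp hx
  have hb : ∀ n, ‖(T f) x‖ ≤ ‖T (f - h n)‖ := by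
    intro n
    have := h2 n
    rwa [h1 n hgx, sub_zero] at this
  have hfin : ‖(T f) x‖ ≤ 0 := ge_of_tendsto hrlim (Filter.Eventually.of_forall hb)
  exact norm_le_zero_iff.mp hfin
end

section
/- Consider $u'=F(u)$ with $F(u)=\varphi(u)Tu-\gamma u$ under Assumption 1 ($T$ positive bounded on $L^\infty$, $\gamma\in L^\infty$, $\gamma>0$ a.e., $\varphi$ locally Lipschitz, nonnegative on $[0,1]$, $\varphi(1)=0$). The set $\Delta = \{f : 0\leq f\leq 1\text{ a.e.}\}$ is forward invariant: any solution with initial condition in $\Delta$ remains in $\Delta$ for all $t\geq 0$ where it exists. -/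
open MeasureTheory ENNReal NNReal


noncomputable section

/-- clamp to [0,1] -/
def clampI (r : ℝ) : ℝ := max 0 (min r 1)

lemma clampI_lip : LipschitzWith 1 clampI := by
  apply LipschitzWith.of_dist_le_mul
  intro a b
  simp only [clampI, Real.dist_eq, NNReal.coe_one, one_mul]
  calc |max 0 (min a 1) - max 0 (min b 1)| = |max (min a 1) 0 - max (min b 1) 0| := by
        rw [max_comm 0, max_comm 0]
    _ ≤ |min a 1 - min b 1| := abs_max_sub_max_le_abs _ _ _
    _ ≤ max |a - b| |1 - 1| := abs_min_sub_min_le_max _ _ _ _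
    _ ≤ |a - b| := by simp

lemma clampI_zero : clampI 0 = 0 := by norm_num [clampI]

lemma clampI_mem (r : ℝ) : clampI r ∈ Set.Icc (0:ℝ) 1 :=
  ⟨le_max_left _ _, max_le (by norm_num) (min_le_right _ _)⟩

lemma clampI_of_mem {r : ℝ} (h : r ∈ Set.Icc (0:ℝ) 1) : clampI r = r := by
  simp [clampI, min_eq_left h.2, max_eq_right h.1]

lemma mem_of_clampI_eq {r : ℝ} (h : clampI r = r) : r ∈ Set.Icc (0:ℝ) 1 :=
  h ▸ clampI_mem r

lemma clampI_dist_le {r z : ℝ} (hz : z ∈ Set.Icc (0:ℝ) 1) : |r - clampI r| ≤ |r - z| := by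
  rcases le_total r 0 with h0 | h0
  · have hc : clampI r = 0 := by
      simp [clampI, min_eq_left (h0.trans zero_le_one), max_eq_left h0]
    have h1 : z - r ≤ |r - z| := by rw [abs_sub_comm]; exact le_abs_self _
    rw [hc, sub_zero, abs_of_nonpos h0]
    linarith [hz.1]
  · rcases le_total r 1 with h1 | h1
    · rw [clampI_of_mem ⟨h0, h1⟩, sub_self, abs_zero]; exact abs_nonneg _
    · have hc : clampI r = 1 := by
        simp [clampI, min_eq_right h1]
      have h2 : r - z ≤ |r - z| := le_abs_self _
      rw [hc, abs_of_nonneg (by linarith)]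
      linarith [hz.2]

/-- A locally Lipschitz function on ℝ is Lipschitz on compacts. -/
lemma LocallyLipschitz.exists_lipschitzOnWith {f : ℝ → ℝ} (hf : LocallyLipschitz f)
    {s : Set ℝ} (hs : IsCompact s) : ∃ K : ℝ≥0, LipschitzOnWith K f s := by
  rcases s.eq_empty_or_nonempty with rfl | hne
  · exact ⟨0, by simp [LipschitzOnWith]⟩
  -- choose for each point a ball on which f is Lipschitz
  have hch : ∀ x : ℝ, ∃ (K : ℝ≥0) (ε : ℝ), 0 < ε ∧ LipschitzOnWith K f (Metric.ball x ε) := by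
    intro x
    obtain ⟨K, t, ht, hK⟩ := hf x
    obtain ⟨ε, hε, hball⟩ := Metric.mem_nhds_iff.1 ht
    exact ⟨K, ε, hε, hK.mono hball⟩
  choose Kf εf hεf hlip using hch
  obtain ⟨tf, htf⟩ := hs.elim_finite_subcover (fun x : ℝ => Metric.ball x (εf x / 2))
    (fun x => Metric.isOpen_ball) (fun x hx => Set.mem_iUnion.2 ⟨x, by
      simp [Metric.mem_ball, half_pos (hεf x)]⟩)
  have htne : tf.Nonempty := by
    obtain ⟨x, hx⟩ := hne
    obtain ⟨i, hi, _⟩ := Set.mem_iUnion₂.1 (htf hx)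
    exact ⟨i, hi⟩
  set δ : ℝ := tf.inf' htne (fun i => εf i / 2) with hδdef
  have hδpos : 0 < δ := by
    rw [hδdef, Finset.lt_inf'_iff]
    exact fun i _ => half_pos (hεf i)
  set K₀ : ℝ≥0 := tf.sup Kf with hK₀def
  -- bound of f on s
  obtain ⟨M, hM⟩ := hs.exists_bound_of_continuousOn hf.continuous.continuousOn
  have hM0 : 0 ≤ M := le_trans (norm_nonneg _) (hM _ hne.choose_spec)
  refine ⟨Real.toNNReal (max (K₀ : ℝ) (2 * M / δ)), LipschitzOnWith.of_dist_le_mul ?_⟩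
  intro x hx y hy
  have hcoe : (Real.toNNReal (max (K₀ : ℝ) (2 * M / δ)) : ℝ) = max (K₀ : ℝ) (2 * M / δ) :=
    Real.coe_toNNReal _ (le_max_of_le_left K₀.coe_nonneg)
  rw [hcoe, Real.dist_eq, Real.dist_eq]
  rcases lt_or_ge |x - y| δ with hd | hd
  · -- within a single ball
    obtain ⟨i, hi, hxball⟩ := Set.mem_iUnion₂.1 (htf hx)
    have hyball : y ∈ Metric.ball i (εf i) := by
      rw [Metric.mem_ball, Real.dist_eq] at hxball ⊢
      have : δ ≤ εf i / 2 := Finset.inf'_le _ hi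
      have h3 : |y - i| ≤ |y - x| + |x - i| := abs_sub_le _ _ _
      rw [abs_sub_comm] at hd
      linarith
    have hxball' : x ∈ Metric.ball i (εf i) :=
      Metric.ball_subset_ball (by linarith [half_pos (hεf i)] : εf i / 2 ≤ εf i) hxball
    have := (hlip i) hxball' hyball
    rw [edist_dist, edist_dist, Real.dist_eq, Real.dist_eq] at this
    have h4 : |f x - f y| ≤ (Kf i : ℝ) * |x - y| := by
      have := ENNReal.toReal_mono (by finiteness) this
      rwa [ENNReal.toReal_ofReal (abs_nonneg _),
        ENNReal.toReal_mul, ENNReal.coe_toReal,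
        ENNReal.toReal_ofReal (abs_nonneg _)] at this
    calc |f x - f y| ≤ (Kf i : ℝ) * |x - y| := h4
      _ ≤ max (K₀ : ℝ) (2 * M / δ) * |x - y| := by
          apply mul_le_mul_of_nonneg_right _ (abs_nonneg _)
          exact le_max_of_le_left (NNReal.coe_le_coe.2 (Finset.le_sup hi))
  · -- far apart
    have h5 : |f x - f y| ≤ 2 * M := by
      have := hM x hx; have := hM y hy
      rw [Real.norm_eq_abs] at *
      calc |f x - f y| ≤ |f x| + |f y| := abs_sub _ _
        _ ≤ 2 * M := by linarith
    calc |f x - f y| ≤ 2 * M := h5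
      _ = (2 * M / δ) * δ := by field_simp
      _ ≤ (2 * M / δ) * |x - y| := by
          apply mul_le_mul_of_nonneg_left hd (by positivity)
      _ ≤ max (K₀ : ℝ) (2 * M / δ) * |x - y| := by
          apply mul_le_mul_of_nonneg_right (le_max_right _ _) (abs_nonneg _)

section LpTop
variable {Ω : Type*} [MeasurableSpace Ω] {μ : Measure Ω}

lemma ae_abs_le_norm (f : Lp ℝ ∞ μ) : ∀ᵐ x ∂μ, |f x| ≤ ‖f‖ := by
  have h := enorm_ae_le_eLpNormEssSup (⇑f) μ
  have hne : eLpNormEssSup (⇑f) μ ≠ ∞ := by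
    have := Lp.eLpNorm_ne_top f
    rwa [eLpNorm_exponent_top] at this
  filter_upwards [h] with x hx
  have := ENNReal.toReal_mono hne hx
  rw [Lp.norm_def, eLpNorm_exponent_top]
  rwa [toReal_enorm, Real.norm_eq_abs] at this

lemma norm_le_of_ae_abs_le [IsFiniteMeasure μ] {f : Lp ℝ ∞ μ} {C : ℝ} (hC : 0 ≤ C)
    (h : ∀ᵐ x ∂μ, |f x| ≤ C) : ‖f‖ ≤ C := by
  have := Lp.norm_le_of_ae_bound (f := f) hC (by simpa [Real.norm_eq_abs] using h)
  simpa using this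

end LpTop

/-- Arithmetic for the Euler step staying in `[0,1]`. -/
lemma euler_step_mem {a fa b c h K M : ℝ}
    (ha0 : 0 ≤ a) (ha1 : a ≤ 1) (hfa0 : 0 ≤ fa) (hfale : fa ≤ K * (1 - a))
    (hb0 : 0 ≤ b) (hbM : b ≤ M) (hc0 : 0 ≤ c)
    (hh : 0 ≤ h) (hhc : h * c ≤ 1) (hhKM : h * (K * M) ≤ 1) :
    0 ≤ a + h * (fa * b - c * a) ∧ a + h * (fa * b - c * a) ≤ 1 := by
  have hK0 : 0 ≤ K * (1 - a) := le_trans hfa0 hfale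
  constructor
  · nlinarith [mul_nonneg hh (mul_nonneg hfa0 hb0), mul_nonneg ha0 (sub_nonneg.2 hhc)]
  · have h1 : fa * b ≤ K * (1 - a) * M := mul_le_mul hfale hbM hb0 hK0
    have h2 : h * (fa * b) ≤ h * (K * (1 - a) * M) := mul_le_mul_of_nonneg_left h1 hh
    nlinarith [mul_nonneg hh (mul_nonneg hc0 ha0),
      mul_nonneg (sub_nonneg.2 ha1) (sub_nonneg.2 hhKM)]

/-- Arithmetic for the Lipschitz estimate of `F`. -/
lemma F_lip_pointwise {a₁ a₂ b₁ b₂ c f₁ f₂ K M R G d : ℝ}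
    (h1 : |f₁ - f₂| ≤ K * d) (h2 : |f₂| ≤ K) (h3 : |b₁| ≤ M * R)
    (h4 : |b₁ - b₂| ≤ M * d) (h5 : |c| ≤ G) (h6 : |a₁ - a₂| ≤ d)
    (hK : 0 ≤ K) (hG : 0 ≤ G) (hd : 0 ≤ d) :
    |f₁ * b₁ - c * a₁ - (f₂ * b₂ - c * a₂)| ≤ (K * M * R + K * M + G) * d := by
  have key : f₁ * b₁ - c * a₁ - (f₂ * b₂ - c * a₂) =
      (f₁ - f₂) * b₁ + f₂ * (b₁ - b₂) - c * (a₁ - a₂) := by ring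
  rw [key]
  have hMR : 0 ≤ M * R := le_trans (abs_nonneg _) h3
  have A : |(f₁ - f₂) * b₁| ≤ (K * d) * (M * R) := by
    rw [abs_mul]; exact mul_le_mul h1 h3 (abs_nonneg _) (by positivity)
  have B : |f₂ * (b₁ - b₂)| ≤ K * (M * d) := by
    rw [abs_mul]; exact mul_le_mul h2 h4 (abs_nonneg _) hK
  have Cc : |c * (a₁ - a₂)| ≤ G * d := by
    rw [abs_mul]; exact mul_le_mul h5 h6 (abs_nonneg _) hG
  have D := abs_sub ((f₁ - f₂) * b₁ + f₂ * (b₁ - b₂)) (c * (a₁ - a₂))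
  have E := abs_add_le ((f₁ - f₂) * b₁) (f₂ * (b₁ - b₂))
  nlinarith [abs_nonneg (c * (a₁ - a₂))]

set_option maxHeartbeats 1000000 in
/-- **Forward invariance of `Δ`** (Assumption 1).  For `u' = F(u)` with
`F(u) = φ(u)·Tu − γ·u`, where `T` is positive bounded on `L^∞` with `‖Tf‖_p ≤ C_p ‖f‖_p`,
`γ ∈ L^∞` with `γ > 0` a.e., `φ` locally Lipschitz, nonnegative on `[0,1]` and `φ(1)=0`:
any solution with initial condition in `Δ = {0 ≤ f ≤ 1 a.e.}` remains in `Δ` for all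
`t ≥ 0` where it exists. -/
theorem Delta_forward_invariant
    {Ω : Type*} [MeasurableSpace Ω] {μ : Measure Ω} [IsFiniteMeasure μ] (hμ : μ ≠ 0)
    {p : ℝ≥0∞} [Fact (1 ≤ p)] (hp1 : 1 < p) (hp2 : p ≠ ∞)
    (T : Lp ℝ ∞ μ →L[ℝ] Lp ℝ ∞ μ) (hT : ∀ f : Lp ℝ ∞ μ, 0 ≤ f → 0 ≤ T f)
    (Cp : ℝ≥0∞) (hCp : Cp ≠ ∞)
    (hTbound : ∀ f : Lp ℝ ∞ μ, eLpNorm (⇑(T f)) p μ ≤ Cp * eLpNorm (⇑f) p μ)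
    (γ : Lp ℝ ∞ μ) (hγ : ∀ᵐ x ∂μ, 0 < γ x)
    (φ : ℝ → ℝ) (hφlip : LocallyLipschitz φ)
    (hφnn : ∀ r ∈ Set.Icc (0:ℝ) 1, 0 ≤ φ r) (hφ1 : φ 1 = 0)
    (F : Lp ℝ ∞ μ → Lp ℝ ∞ μ)
    (hF : ∀ w : Lp ℝ ∞ μ, ⇑(F w) =ᵐ[μ] fun x => φ (w x) * (T w) x - γ x * w x)
    (τ : ℝ) (u : ℝ → Lp ℝ ∞ μ)
    (hsol : ∀ t ∈ Set.Ico (0:ℝ) τ, HasDerivWithinAt u (F (u t)) (Set.Ico 0 τ) t)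
    (h0 : ∀ᵐ x ∂μ, u 0 x ∈ Set.Icc (0:ℝ) 1) :
    ∀ t ∈ Set.Ico (0:ℝ) τ, ∀ᵐ x ∂μ, u t x ∈ Set.Icc (0:ℝ) 1 := by
  intro t ht
  -- the "projection onto Δ" map
  set P : Lp ℝ ∞ μ → Lp ℝ ∞ μ := fun v => clampI_lip.compLp clampI_zero v with hPdef
  have hPcoe : ∀ v : Lp ℝ ∞ μ, ⇑(P v) =ᵐ[μ] fun x => clampI (v x) :=
    fun v => clampI_lip.coeFn_compLp clampI_zero v
  have hPmem : ∀ v : Lp ℝ ∞ μ, ∀ᵐ x ∂μ, (P v) x ∈ Set.Icc (0:ℝ) 1 := by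
    intro v
    filter_upwards [hPcoe v] with x hx
    rw [hx]; exact clampI_mem _
  have hPopt : ∀ v z : Lp ℝ ∞ μ, (∀ᵐ x ∂μ, z x ∈ Set.Icc (0:ℝ) 1) →
      ‖v - P v‖ ≤ ‖v - z‖ := by
    intro v z hz
    apply Lp.norm_le_norm_of_ae_le
    filter_upwards [hPcoe v, Lp.coeFn_sub v (P v), Lp.coeFn_sub v z, hz] with x h1 h2 h3 h4
    rw [h2, h3]
    simp only [Pi.sub_apply, Real.norm_eq_abs, h1]
    exact clampI_dist_le h4
  set g : ℝ → ℝ := fun s => ‖u s - P (u s)‖ with hgdef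
  -- it suffices to show g t = 0
  suffices hgt : g t = 0 by
    have h1 : u t - P (u t) = 0 := by
      rw [← norm_eq_zero]; exact hgt
    have h2 : u t = P (u t) := by rwa [sub_eq_zero] at h1
    filter_upwards [hPcoe (u t)] with x hx
    apply mem_of_clampI_eq
    rw [← hx, ← h2]
  have hg0 : g 0 = 0 := by
    refine le_antisymm ?_ (norm_nonneg _)
    have h := hPopt (u 0) (u 0) h0
    rwa [sub_self, norm_zero] at h
  -- continuity of the solution on [0, t]
  have hsub : Set.Icc (0:ℝ) t ⊆ Set.Ico 0 τ :=
    fun s hs => ⟨hs.1, lt_of_le_of_lt hs.2 ht.2⟩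
  have hucont : ContinuousOn u (Set.Icc 0 t) := fun s hs =>
    ((hsol s (hsub hs)).continuousWithinAt).mono hsub
  -- uniform bound on the trajectory
  obtain ⟨C, hC⟩ := isCompact_Icc.exists_bound_of_continuousOn hucont
  set R : ℝ := max C 1 with hRdef
  have hR1 : (1:ℝ) ≤ R := le_max_right _ _
  have hR : ∀ s ∈ Set.Icc (0:ℝ) t, ‖u s‖ ≤ R := fun s hs => (hC s hs).trans (le_max_left _ _)
  -- Lipschitz constant for φ on [-R, R]
  obtain ⟨K, hK⟩ := hφlip.exists_lipschitzOnWith (isCompact_Icc (a := -R) (b := R))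
  have hKd : ∀ a ∈ Set.Icc (-R) R, ∀ b ∈ Set.Icc (-R) R, |φ a - φ b| ≤ (K:ℝ) * |a - b| := by
    intro a ha b hb
    have := hK.dist_le_mul a ha b hb
    rwa [Real.dist_eq, Real.dist_eq] at this
  have hmemIcc : ∀ r ∈ Set.Icc (0:ℝ) 1, r ∈ Set.Icc (-R) R :=
    fun r hr => ⟨le_trans (by linarith) hr.1, le_trans hr.2 hR1⟩
  have hφle : ∀ r ∈ Set.Icc (0:ℝ) 1, φ r ≤ (K:ℝ) * (1 - r) := by
    intro r hr
    have h1 := hKd r (hmemIcc r hr) 1 (hmemIcc 1 ⟨zero_le_one, le_refl 1⟩)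
    rw [hφ1, sub_zero] at h1
    have h2 : φ r ≤ |φ r| := le_abs_self _
    have h3 : |r - 1| = 1 - r := by rw [abs_sub_comm]; exact abs_of_nonneg (by linarith [hr.2])
    rw [h3] at h1; linarith
  have hφub : ∀ r ∈ Set.Icc (0:ℝ) 1, φ r ≤ (K:ℝ) := by
    intro r hr
    have := hφle r hr
    nlinarith [hr.1, K.coe_nonneg]
  set M : ℝ := ‖T‖ with hMdef
  have hM0 : 0 ≤ M := norm_nonneg _
  set G : ℝ := ‖γ‖ with hGdef
  have hG0 : 0 ≤ G := norm_nonneg _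
  set L : ℝ := (K:ℝ) * M * R + (K:ℝ) * M + G with hLdef
  have hL0 : 0 ≤ L := by positivity
  set h₀ : ℝ := min (1/(G+1)) (1/((K:ℝ)*M+1)) with hh₀def
  have hh₀pos : 0 < h₀ := lt_min (by positivity) (by positivity)
  -- invariance of Δ under Euler steps
  have hinv : ∀ v : Lp ℝ ∞ μ, (∀ᵐ x ∂μ, v x ∈ Set.Icc (0:ℝ) 1) → ∀ h : ℝ, 0 ≤ h → h ≤ h₀ →
      ∀ᵐ x ∂μ, (v + h • F v) x ∈ Set.Icc (0:ℝ) 1 := by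
    intro v hv h hh hhh₀
    have hv0 : (0:Lp ℝ ∞ μ) ≤ v := by
      refine (Lp.coeFn_nonneg v).1 ?_
      filter_upwards [hv] with x hx
      simpa using hx.1
    have hv1 : ‖v‖ ≤ 1 := norm_le_of_ae_abs_le zero_le_one
      (by filter_upwards [hv] with x hx; rw [abs_le]; exact ⟨by linarith [hx.1], hx.2⟩)
    have hTv0 : (0:Lp ℝ ∞ μ) ≤ T v := hT v hv0
    have hTv0' : ∀ᵐ x ∂μ, 0 ≤ (T v) x := by
      have := (Lp.coeFn_nonneg (T v)).2 hTv0
      filter_upwards [this] with x hx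
      simpa using hx
    have hTvub : ‖T v‖ ≤ M := by
      calc ‖T v‖ ≤ M * ‖v‖ := T.le_opNorm v
        _ ≤ M * 1 := by nlinarith
        _ = M := mul_one M
    filter_upwards [Lp.coeFn_add v (h • F v), Lp.coeFn_smul h (F v), hF v, hv,
      ae_abs_le_norm γ, hγ, hTv0', ae_abs_le_norm (T v)] with x e1 e2 e3 e4 e5 e6 e7 e8
    rw [Set.mem_Icc, e1]
    simp only [Pi.add_apply]
    rw [e2]
    simp only [Pi.smul_apply, smul_eq_mul]
    rw [e3]
    have b4 : h * γ x ≤ 1 := by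
      have c1 : γ x ≤ G := le_trans (le_abs_self _) e5
      have c2 : h ≤ 1/(G+1) := le_trans hhh₀ (min_le_left _ _)
      have c3 : h * γ x ≤ (1/(G+1)) * G :=
        mul_le_mul c2 c1 e6.le (by positivity)
      have c4 : (1/(G+1)) * G ≤ 1 := by
        rw [div_mul_eq_mul_div, one_mul, div_le_one (by positivity)]; linarith
      linarith
    have b5 : h * ((K:ℝ) * M) ≤ 1 := by
      have c2 : h ≤ 1/((K:ℝ)*M+1) := le_trans hhh₀ (min_le_right _ _)
      have c3 : h * ((K:ℝ)*M) ≤ (1/((K:ℝ)*M+1)) * ((K:ℝ)*M) := by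
        apply mul_le_mul c2 (le_refl _) (by positivity) (by positivity)
      have c4 : (1/((K:ℝ)*M+1)) * ((K:ℝ)*M) ≤ 1 := by
        rw [div_mul_eq_mul_div, one_mul, div_le_one (by positivity)]; linarith
      linarith
    exact euler_step_mem e4.1 e4.2 (hφnn _ e4) (hφle _ e4) e7
      (le_trans (le_abs_self _) (e8.trans hTvub)) e6.le hh b4 b5
  -- Lipschitz estimate for F between the trajectory and its projection
  have hFlip : ∀ s ∈ Set.Icc (0:ℝ) t, ‖F (u s) - F (P (u s))‖ ≤ L * g s := by
    intro s hs
    set v₁ := u s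
    set v₂ := P (u s)
    have hgs : g s = ‖v₁ - v₂‖ := rfl
    have hgs0 : 0 ≤ g s := norm_nonneg _
    have hTv₁ : ‖T v₁‖ ≤ M * R := by
      calc ‖T v₁‖ ≤ M * ‖v₁‖ := T.le_opNorm v₁
        _ ≤ M * R := by nlinarith [hR s hs]
    have hTd : ‖T v₁ - T v₂‖ ≤ M * g s := by
      rw [← map_sub]
      calc ‖T (v₁ - v₂)‖ ≤ M * ‖v₁ - v₂‖ := T.le_opNorm _
        _ = M * g s := by rw [hgs]
    apply norm_le_of_ae_abs_le (by positivity)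
    filter_upwards [Lp.coeFn_sub (F v₁) (F v₂), hF v₁, hF v₂, ae_abs_le_norm v₁, hPmem (u s),
      ae_abs_le_norm (T v₁), Lp.coeFn_sub (T v₁) (T v₂), ae_abs_le_norm (T v₁ - T v₂),
      ae_abs_le_norm γ, Lp.coeFn_sub v₁ v₂, ae_abs_le_norm (v₁ - v₂)]
      with x e1 e2 e3 e4 e5 e6 e7 e8 e9 e10 e11
    rw [e1]
    simp only [Pi.sub_apply]
    rw [e2, e3]
    have m1 : v₁ x ∈ Set.Icc (-R) R := by
      rw [Set.mem_Icc, ← abs_le]; exact e4.trans (hR s hs)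
    have m2 : v₂ x ∈ Set.Icc (-R) R := hmemIcc _ e5
    have n1 : |v₁ x - v₂ x| ≤ g s := by
      have := e11; rw [e10] at this; simpa using this
    have n2 : |φ (v₁ x) - φ (v₂ x)| ≤ (K:ℝ) * g s := by
      calc |φ (v₁ x) - φ (v₂ x)| ≤ (K:ℝ) * |v₁ x - v₂ x| := hKd _ m1 _ m2
        _ ≤ (K:ℝ) * g s := mul_le_mul_of_nonneg_left n1 K.coe_nonneg
    have n3 : |φ (v₂ x)| ≤ (K:ℝ) := by
      rw [abs_of_nonneg (hφnn _ e5)]; exact hφub _ e5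
    have n4 : |(T v₁) x| ≤ M * R := e6.trans hTv₁
    have n5 : |(T v₁) x - (T v₂) x| ≤ M * g s := by
      have := e8; rw [e7] at this; simpa using this.trans hTd
    have n6 : |γ x| ≤ G := e9
    have := F_lip_pointwise n2 n3 n4 n5 n6 n1 K.coe_nonneg hG0 hgs0
    rw [hLdef]
    exact this
  -- continuity of g
  have hgcont : ContinuousOn g (Set.Icc 0 t) := by
    have hPcont : Continuous P := clampI_lip.continuous_compLp clampI_zero
    exact (hucont.sub (hPcont.comp_continuousOn hucont)).norm
  -- Gronwall
  have key := le_gronwallBound_of_liminf_deriv_right_le (f := g) (f' := fun s => L * g s)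
    (δ := 0) (K := L) (ε := 0) (a := 0) (b := t) hgcont ?_ hg0.le
    (fun s _ => by simp)
  · have := key t ⟨ht.1, le_refl t⟩
    rw [gronwallBound_ε0_δ0] at this
    exact le_antisymm this (norm_nonneg _)
  -- the liminf condition
  intro s hs r hr
  have hsτ : s ∈ Set.Ico 0 τ := ⟨hs.1, lt_trans hs.2 ht.2⟩
  have hsIcc : s ∈ Set.Icc (0:ℝ) t := ⟨hs.1, hs.2.le⟩
  have hr' : L * g s < r := hr
  set ε' : ℝ := (r - L * g s)/2 with hε'def
  have hε'pos : 0 < ε' := by rw [hε'def]; exact half_pos (sub_pos.2 hr')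
  have hder := hsol s hsτ
  have hlo := hasDerivWithinAt_iff_isLittleO.1 hder
  have hev := Asymptotics.isLittleO_iff.1 hlo hε'pos
  rw [eventually_nhdsWithin_iff] at hev
  have hev' : ∀ᶠ z in nhdsWithin s (Set.Ioi s),
      z ∈ Set.Ico 0 τ → ‖u z - u s - (z - s) • F (u s)‖ ≤ ε' * ‖z - s‖ :=
    hev.filter_mono nhdsWithin_le_nhds
  have hmem : ∀ᶠ z in nhdsWithin s (Set.Ioi s), z ∈ Set.Ico 0 τ := by
    have h1 : ∀ᶠ z in nhds s, z ∈ Set.Iio τ := isOpen_Iio.eventually_mem hsτ.2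
    filter_upwards [h1.filter_mono nhdsWithin_le_nhds, self_mem_nhdsWithin] with z hz1 hz2
    exact ⟨le_of_lt (lt_of_le_of_lt hs.1 hz2), hz1⟩
  have hsmall : ∀ᶠ z in nhdsWithin s (Set.Ioi s), z < s + h₀ := by
    have h1 : ∀ᶠ z in nhds s, z ∈ Set.Iio (s + h₀) :=
      isOpen_Iio.eventually_mem (by simp [hh₀pos])
    exact h1.filter_mono nhdsWithin_le_nhds
  have main : ∀ᶠ z in nhdsWithin s (Set.Ioi s), (z - s)⁻¹ * (g z - g s) < r := by
    filter_upwards [hev', hmem, hsmall, self_mem_nhdsWithin] with z hz1 hz2 hz3 hz4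
    have hzs : s < z := hz4
    set h : ℝ := z - s with hhdef
    have hhpos : 0 < h := by simp only [hhdef]; linarith
    have hhle : h ≤ h₀ := by simp only [hhdef]; linarith
    have hQ : ‖u z - u s - h • F (u s)‖ ≤ ε' * h := by
      have := hz1 hz2
      rwa [Real.norm_eq_abs, abs_of_pos hhpos] at this
    have m1 : ∀ᵐ x ∂μ, (P (u s) + h • F (P (u s))) x ∈ Set.Icc (0:ℝ) 1 :=
      hinv (P (u s)) (hPmem _) h hhpos.le hhle
    have m2 : g z ≤ ‖u z - (P (u s) + h • F (P (u s)))‖ := hPopt (u z) _ m1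
    have m3 : u z - (P (u s) + h • F (P (u s))) =
        (u z - u s - h • F (u s)) + (u s - P (u s)) + h • (F (u s) - F (P (u s))) := by
      rw [smul_sub]; abel
    have m4 : g z ≤ ε' * h + g s + h * (L * g s) := by
      rw [m3] at m2
      calc g z ≤ ‖u z - u s - h • F (u s)‖ + ‖u s - P (u s)‖
            + ‖h • (F (u s) - F (P (u s)))‖ := m2.trans (norm_add₃_le)
        _ ≤ ε' * h + g s + h * (L * g s) := by
            have : ‖h • (F (u s) - F (P (u s)))‖ = h * ‖F (u s) - F (P (u s))‖ := by
              rw [norm_smul, Real.norm_eq_abs, abs_of_pos hhpos]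
            rw [this]
            have := hFlip s hsIcc
            have hgsnn : (0:ℝ) ≤ g s := norm_nonneg _
            gcongr
    have m5 : (z - s)⁻¹ * (g z - g s) ≤ ε' + L * g s := by
      rw [← hhdef, ← div_eq_inv_mul, div_le_iff₀ hhpos]
      nlinarith
    have : ε' + L * g s < r := by rw [hε'def]; linarith [hr']
    linarith
  exact main.frequently
end
end

section
/- Monotonicity of the maximal equilibrium in the parameters: for $i=1,2$ let $(T_i,\gamma_i,\varphi_i)$ satisfy Assumption 1, with maximal equilibria $g_1^*, g_2^*$. If $T_1\geq T_2$ (as positive operators), $\varphi_1\geq\varphi_2$ pointwise, and $\gamma_1\leq\gamma_2$ a.e., then $g_1^*\geq g_2^*$ a.e. -/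
open MeasureTheory ENNReal NNReal Filter Topology

lemma exists_lipschitzOnWith_of_locallyLipschitz {φ : ℝ → ℝ} (hφ : LocallyLipschitz φ)
    {s : Set ℝ} (hs : IsCompact s) : ∃ L : ℝ≥0, LipschitzOnWith L φ s := by
  have hcont := hφ.continuous
  choose K t ht hlip using hφ
  obtain ⟨F, -, hF⟩ := hs.elim_nhds_subcover (fun x => interior (t x))
    (fun x _ => interior_mem_nhds.2 (ht x))
  obtain ⟨M, hM⟩ := hs.exists_bound_of_continuousOn hcont.continuousOn
  rcases Set.eq_empty_or_nonempty s with rfl | ⟨x₀, hx₀⟩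
  · exact ⟨1, by simp [LipschitzOnWith]⟩
  have hM0 : 0 ≤ M := le_trans (norm_nonneg _) (hM x₀ hx₀)
  obtain ⟨δ, hδ0, hδ⟩ := lebesgue_number_lemma_of_metric (c := fun i : F => interior (t i)) hs
    (fun i => isOpen_interior)
    (by intro x hx
        obtain ⟨i, hiF, hxi⟩ := Set.mem_iUnion₂.1 (hF hx)
        exact Set.mem_iUnion.2 ⟨⟨i, hiF⟩, hxi⟩)
  set K0 : ℝ≥0 := F.sup K with hK0
  set L : ℝ≥0 := K0 + Real.toNNReal (2 * M / δ) with hL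
  have hK0L : (K0 : ℝ) ≤ L := by
    rw [hL]; push_cast; nlinarith [(Real.toNNReal (2 * M / δ)).coe_nonneg]
  refine ⟨L, LipschitzOnWith.of_dist_le_mul fun x hx y hy => ?_⟩
  by_cases hd : dist x y < δ
  · obtain ⟨i, hi⟩ := hδ x hx
    have hxt : x ∈ t i := interior_subset (hi (Metric.mem_ball_self hδ0))
    have hyt : y ∈ t i := interior_subset (hi (by rwa [Metric.mem_ball, dist_comm]))
    have h1 : dist (φ x) (φ y) ≤ (K i : ℝ) * dist x y := (hlip i).dist_le_mul x hxt y hyt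
    have h2 : (K (i : ℝ) : ℝ) ≤ K0 := by exact_mod_cast Finset.le_sup i.2
    nlinarith [dist_nonneg (x := x) (y := y)]
  · push_neg at hd
    have h1 : dist (φ x) (φ y) ≤ 2 * M := by
      have := hM x hx; have := hM y hy
      rw [Real.dist_eq]
      simp only [Real.norm_eq_abs] at *
      calc |φ x - φ y| ≤ |φ x| + |φ y| := abs_sub _ _
        _ ≤ 2 * M := by linarith
    have h2 : 2 * M / δ ≤ (Real.toNNReal (2 * M / δ) : ℝ) := Real.le_coe_toNNReal _
    have h3 : (Real.toNNReal (2 * M / δ) : ℝ) ≤ L := by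
      rw [hL]; push_cast; nlinarith [K0.coe_nonneg]
    have h4 : 2 * M ≤ (L : ℝ) * dist x y := by
      have h5 : 2 * M / δ * δ = 2 * M := div_mul_cancel₀ _ hδ0.ne'
      nlinarith [(Real.toNNReal (2 * M / δ)).coe_nonneg, L.coe_nonneg]
    linarith

set_option maxHeartbeats 2000000 in
/-- **Monotonicity of the maximal equilibrium in the parameters.**  For `i = 1,2`, let
`(Tᵢ, γᵢ, φᵢ)` satisfy Assumption 1, with maximal equilibria `gᵢ*` (the largest `g ∈ Δ`
with `Fᵢ(g) = 0`).  If `T₁ ≥ T₂` (as positive operators), `φ₁ ≥ φ₂` pointwise and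
`γ₁ ≤ γ₂` a.e., then `g₁* ≥ g₂*` a.e. -/
theorem maximal_equilibrium_monotone
    {Ω : Type*} [MeasurableSpace Ω] {μ : Measure Ω} [IsFiniteMeasure μ] (hμ : μ ≠ 0)
    {p : ℝ≥0∞} [Fact (1 ≤ p)] (hp1 : 1 < p) (hp2 : p ≠ ∞)
    (T₁ T₂ : Lp ℝ ∞ μ →L[ℝ] Lp ℝ ∞ μ)
    (hT₁ : ∀ f : Lp ℝ ∞ μ, 0 ≤ f → 0 ≤ T₁ f) (hT₂ : ∀ f : Lp ℝ ∞ μ, 0 ≤ f → 0 ≤ T₂ f)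
    (Cp : ℝ≥0∞) (hCp : Cp ≠ ∞)
    (hT₁bound : ∀ f : Lp ℝ ∞ μ, eLpNorm (⇑(T₁ f)) p μ ≤ Cp * eLpNorm (⇑f) p μ)
    (hT₂bound : ∀ f : Lp ℝ ∞ μ, eLpNorm (⇑(T₂ f)) p μ ≤ Cp * eLpNorm (⇑f) p μ)
    (γ₁ γ₂ : Lp ℝ ∞ μ) (hγ₁ : ∀ᵐ x ∂μ, 0 < γ₁ x) (hγ₂ : ∀ᵐ x ∂μ, 0 < γ₂ x)
    (φ₁ φ₂ : ℝ → ℝ) (hφ₁lip : LocallyLipschitz φ₁) (hφ₂lip : LocallyLipschitz φ₂)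
    (hφ₁nn : ∀ r ∈ Set.Icc (0:ℝ) 1, 0 ≤ φ₁ r) (hφ₂nn : ∀ r ∈ Set.Icc (0:ℝ) 1, 0 ≤ φ₂ r)
    (hφ₁1 : φ₁ 1 = 0) (hφ₂1 : φ₂ 1 = 0)
    (F₁ F₂ : Lp ℝ ∞ μ → Lp ℝ ∞ μ)
    (hF₁ : ∀ w : Lp ℝ ∞ μ, ⇑(F₁ w) =ᵐ[μ] fun x => φ₁ (w x) * (T₁ w) x - γ₁ x * w x)
    (hF₂ : ∀ w : Lp ℝ ∞ μ, ⇑(F₂ w) =ᵐ[μ] fun x => φ₂ (w x) * (T₂ w) x - γ₂ x * w x)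
    -- the maximal equilibria
    (g₁ g₂ : Lp ℝ ∞ μ)
    (hg₁Δ : ∀ᵐ x ∂μ, g₁ x ∈ Set.Icc (0:ℝ) 1) (hg₂Δ : ∀ᵐ x ∂μ, g₂ x ∈ Set.Icc (0:ℝ) 1)
    (hg₁eq : F₁ g₁ = 0) (hg₂eq : F₂ g₂ = 0)
    (hg₁max : ∀ g : Lp ℝ ∞ μ, (∀ᵐ x ∂μ, g x ∈ Set.Icc (0:ℝ) 1) → F₁ g = 0 → g ≤ g₁)
    (hg₂max : ∀ g : Lp ℝ ∞ μ, (∀ᵐ x ∂μ, g x ∈ Set.Icc (0:ℝ) 1) → F₂ g = 0 → g ≤ g₂)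
    -- comparison of the parameters
    (hTle : ∀ f : Lp ℝ ∞ μ, 0 ≤ f → T₂ f ≤ T₁ f)
    (hφle : ∀ r : ℝ, φ₂ r ≤ φ₁ r)
    (hγle : ∀ᵐ x ∂μ, γ₁ x ≤ γ₂ x) :
    ∀ᵐ x ∂μ, g₂ x ≤ g₁ x := by
  classical
  -- a.e. bound by the L∞-norm
  have habs : ∀ f : Lp ℝ ∞ μ, ∀ᵐ x ∂μ, |f x| ≤ ‖f‖ := by
    intro f
    filter_upwards [enorm_ae_le_eLpNormEssSup (⇑f) μ] with x hx
    have h2 : ((‖f x‖₊ : ℝ≥0∞)).toReal ≤ (eLpNorm (⇑f) ∞ μ).toReal :=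
      ENNReal.toReal_mono (Lp.eLpNorm_ne_top f) (by rwa [eLpNorm_exponent_top])
    simpa [Lp.norm_def, Real.norm_eq_abs] using h2
  have hnorm1 : ∀ g : Lp ℝ ∞ μ, (∀ᵐ x ∂μ, g x ∈ Set.Icc (0:ℝ) 1) → ‖g‖ ≤ 1 := by
    intro g hg
    rw [Lp.norm_def, eLpNorm_exponent_top]
    have h1 : eLpNormEssSup (⇑g) μ ≤ ENNReal.ofReal 1 :=
      eLpNormEssSup_le_of_ae_bound (C := 1)
        (by filter_upwards [hg] with x hx
            rw [Real.norm_eq_abs, abs_le]; exact ⟨by linarith [hx.1], hx.2⟩)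
    calc (eLpNormEssSup (⇑g) μ).toReal ≤ (ENNReal.ofReal 1).toReal :=
          ENNReal.toReal_mono (by simp) h1
      _ = 1 := by simp
  -- Lipschitz constant of φ₁ on [0,1]
  obtain ⟨L, hLip⟩ := exists_lipschitzOnWith_of_locallyLipschitz hφ₁lip
    (isCompact_Icc (a := (0:ℝ)) (b := 1))
  have hLd : ∀ a b : ℝ, a ∈ Set.Icc (0:ℝ) 1 → b ∈ Set.Icc (0:ℝ) 1 →
      |φ₁ a - φ₁ b| ≤ (L:ℝ) * |a - b| := by
    intro a b ha hb
    have := hLip.dist_le_mul a ha b hb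
    rwa [Real.dist_eq, Real.dist_eq] at this
  set M : ℝ := ‖T₁‖ with hMdef
  have hM0 : 0 ≤ M := norm_nonneg _
  set G : ℝ := ‖γ₁‖ with hGdef
  have hG0 : 0 ≤ G := norm_nonneg _
  set h : ℝ := 1 / ((L:ℝ) * M + G + 1) with hhdef
  have hden : 0 < (L:ℝ) * M + G + 1 := by positivity
  have hpos : 0 < h := by positivity
  have hmain : h * ((L:ℝ) * M + G + 1) = 1 := by
    rw [hhdef]; field_simp
  have hhG : h * G ≤ 1 := by nlinarith [L.coe_nonneg]
  have hhLM : h * ((L:ℝ) * M) ≤ 1 := by nlinarith [L.coe_nonneg]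
  have hhLMG : h * ((L:ℝ) * M + G) ≤ 1 := by nlinarith [L.coe_nonneg]
  -- the Euler map
  set S : Lp ℝ ∞ μ → Lp ℝ ∞ μ := fun g => g + h • F₁ g with hSdef
  have hS : ∀ g : Lp ℝ ∞ μ,
      ⇑(S g) =ᵐ[μ] fun x => g x + h * (φ₁ (g x) * (T₁ g) x - γ₁ x * g x) := by
    intro g
    filter_upwards [Lp.coeFn_add g (h • F₁ g), Lp.coeFn_smul h (F₁ g), hF₁ g] with x h1 h2 h3
    simp only [hSdef, h1, Pi.add_apply, h2, Pi.smul_apply, smul_eq_mul, h3]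
  -- a.e. bounds for T₁ g when g ∈ Δ
  have hTbd : ∀ g : Lp ℝ ∞ μ, (∀ᵐ x ∂μ, g x ∈ Set.Icc (0:ℝ) 1) →
      ∀ᵐ x ∂μ, 0 ≤ (T₁ g) x ∧ (T₁ g) x ≤ M := by
    intro g hg
    have hg0 : (0 : Lp ℝ ∞ μ) ≤ g := by
      rw [← Lp.coeFn_nonneg]
      filter_upwards [hg, Lp.coeFn_zero (E := ℝ) (p := ∞) (μ := μ)] with x hx h0
      exact hx.1
    have h1 := (Lp.coeFn_le (0 : Lp ℝ ∞ μ) (T₁ g)).2 (hT₁ g hg0)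
    have h2 : ‖T₁ g‖ ≤ M := by
      calc ‖T₁ g‖ ≤ ‖T₁‖ * ‖g‖ := T₁.le_opNorm g
        _ ≤ ‖T₁‖ * 1 := by
            have := hnorm1 g hg
            nlinarith [norm_nonneg T₁]
        _ = M := by rw [mul_one]
    filter_upwards [h1, habs (T₁ g), Lp.coeFn_zero (E := ℝ) (p := ∞) (μ := μ)] with x hx hx2 h0
    have hx' : (0:ℝ) ≤ (T₁ g) x := by rw [h0] at hx; exact hx
    exact ⟨hx', le_trans (le_abs_self _) (le_trans hx2 h2)⟩
  have hγbd : ∀ᵐ x ∂μ, 0 < γ₁ x ∧ γ₁ x ≤ G := by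
    filter_upwards [hγ₁, habs γ₁] with x h1 h2
    exact ⟨h1, le_trans (le_abs_self _) h2⟩
  -- positivity of T under comparison, pointwise
  have hTmono : ∀ g g' : Lp ℝ ∞ μ, g ≤ g' → ∀ᵐ x ∂μ, (T₁ g) x ≤ (T₁ g') x := by
    intro g g' hle
    have h0 : (0:Lp ℝ ∞ μ) ≤ T₁ g' - T₁ g := by
      rw [← map_sub]; exact hT₁ _ (sub_nonneg.2 hle)
    have h1 := (Lp.coeFn_le (0 : Lp ℝ ∞ μ) (T₁ g' - T₁ g)).2 h0
    filter_upwards [h1, Lp.coeFn_sub (T₁ g') (T₁ g),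
      Lp.coeFn_zero (E := ℝ) (p := ∞) (μ := μ)] with x hx h2 h3
    rw [h3] at hx
    simp only [h2, Pi.sub_apply, Pi.zero_apply] at hx
    linarith
  -- invariance of Δ under S
  have hinv : ∀ g : Lp ℝ ∞ μ, (∀ᵐ x ∂μ, g x ∈ Set.Icc (0:ℝ) 1) →
      ∀ᵐ x ∂μ, (S g) x ∈ Set.Icc (0:ℝ) 1 := by
    intro g hg
    filter_upwards [hS g, hg, hTbd g hg, hγbd] with x hx hgx hTx hγx
    rw [hx]
    obtain ⟨ha0, ha1⟩ := hgx
    obtain ⟨hA0, hA1⟩ := hTx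
    obtain ⟨hc0, hcG⟩ := hγx
    have hφa : 0 ≤ φ₁ (g x) := hφ₁nn _ ⟨ha0, ha1⟩
    have hφub : φ₁ (g x) ≤ (L:ℝ) * (1 - g x) := by
      have h1 := hLd (g x) 1 ⟨ha0, ha1⟩ (by norm_num)
      rw [hφ₁1, sub_zero] at h1
      have h2 := le_trans (le_abs_self _) h1
      rwa [abs_of_nonpos (by linarith), neg_sub] at h2
    set a := g x with hadef
    set A := (T₁ g) x with hAdef
    set c := γ₁ x with hcdef
    set f := φ₁ a with hfdef
    clear_value a A c f
    clear hadef hAdef hcdef hfdef hx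
    constructor
    · have k1 : 0 ≤ h * (f * A) := by positivity
      have k2 : h * c * a ≤ h * G * a :=
        mul_le_mul_of_nonneg_right (mul_le_mul_of_nonneg_left hcG hpos.le) ha0
      have k3 : 0 ≤ a * (1 - h * G) := mul_nonneg ha0 (by nlinarith)
      nlinarith
    · have hL1a : 0 ≤ (L:ℝ) * (1 - a) := mul_nonneg L.coe_nonneg (by linarith)
      have k1 : f * A ≤ (L:ℝ) * (1 - a) * M :=
        le_trans (mul_le_mul_of_nonneg_right hφub hA0) (mul_le_mul_of_nonneg_left hA1 hL1a)
      have k2 : h * (f * A) ≤ h * ((L:ℝ) * (1 - a) * M) := mul_le_mul_of_nonneg_left k1 hpos.le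
      have k3 : 0 ≤ (1 - a) * (1 - h * ((L:ℝ) * M)) := mul_nonneg (by linarith) (by linarith)
      have k4 : 0 ≤ h * (c * a) := by positivity
      nlinarith
  -- monotonicity of S on Δ
  have hmono : ∀ g g' : Lp ℝ ∞ μ, (∀ᵐ x ∂μ, g x ∈ Set.Icc (0:ℝ) 1) →
      (∀ᵐ x ∂μ, g' x ∈ Set.Icc (0:ℝ) 1) → g ≤ g' → S g ≤ S g' := by
    intro g g' hg hg' hle
    rw [← Lp.coeFn_le]
    filter_upwards [hS g, hS g', hg, hg', (Lp.coeFn_le g g').2 hle, hTmono g g' hle,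
      hTbd g hg, hγbd] with x hx hx' hgx hgx' hlex hTx hTbdx hγx
    rw [hx, hx']
    obtain ⟨hA0, hAM⟩ := hTbdx
    obtain ⟨hc0, hcG⟩ := hγx
    have hφ' : 0 ≤ φ₁ (g' x) := hφ₁nn _ hgx'
    have hφd : φ₁ (g x) - φ₁ (g' x) ≤ (L:ℝ) * (g' x - g x) := by
      have h1 := hLd (g x) (g' x) hgx hgx'
      have h2 := le_trans (le_abs_self _) h1
      rwa [abs_of_nonpos (by linarith [hgx.1, hgx.2]), neg_sub] at h2
    set a := g x with hadef
    set b := g' x with hbdef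
    set A := (T₁ g) x with hAdef
    set B := (T₁ g') x with hBdef
    set c := γ₁ x with hcdef
    set f := φ₁ a with hfdef
    set f' := φ₁ b with hfdef'
    clear_value a b A B c f f'
    clear hadef hbdef hAdef hBdef hcdef hfdef hfdef' hx hx'
    have hd : 0 ≤ b - a := by linarith
    have key : f * A - f' * B ≤ (L:ℝ) * M * (b - a) := by
      have e1 : 0 ≤ f' * (B - A) := mul_nonneg hφ' (by linarith)
      have e2 : (f - f') * A ≤ (L:ℝ) * (b - a) * A :=
        mul_le_mul_of_nonneg_right hφd hA0
      have e3 : (L:ℝ) * (b - a) * A ≤ (L:ℝ) * (b - a) * M :=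
        mul_le_mul_of_nonneg_left hAM (by positivity)
      nlinarith
    have key2 : h * (f * A - f' * B) ≤ h * ((L:ℝ) * M * (b - a)) :=
      mul_le_mul_of_nonneg_left key hpos.le
    have hc' : h * (c * (b - a)) ≤ h * (G * (b - a)) := by
      have : c * (b - a) ≤ G * (b - a) := mul_le_mul_of_nonneg_right hcG hd
      exact mul_le_mul_of_nonneg_left this hpos.le
    have P3 : 0 ≤ (b - a) * (1 - h * ((L:ℝ) * M + G)) := mul_nonneg hd (by linarith)
    nlinarith
  -- base step : g₂ ≤ S g₂
  have hg₂0 : (0 : Lp ℝ ∞ μ) ≤ g₂ := by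
    rw [← Lp.coeFn_nonneg]
    filter_upwards [hg₂Δ, Lp.coeFn_zero (E := ℝ) (p := ∞) (μ := μ)] with x hx h0
    exact hx.1
  have hF₁g₂ : ∀ᵐ x ∂μ, 0 ≤ φ₁ (g₂ x) * (T₁ g₂) x - γ₁ x * g₂ x := by
    have hT2pos := (Lp.coeFn_le (0 : Lp ℝ ∞ μ) (T₂ g₂)).2 (hT₂ g₂ hg₂0)
    have hT21 := (Lp.coeFn_le (T₂ g₂) (T₁ g₂)).2 (hTle g₂ hg₂0)
    have heq0 : ⇑(F₂ g₂) =ᵐ[μ] (0 : Ω → ℝ) := by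
      rw [hg₂eq]; exact Lp.coeFn_zero ℝ ∞ μ
    filter_upwards [hg₂Δ, hT2pos, hT21, hγle, hF₂ g₂, heq0,
      Lp.coeFn_zero (E := ℝ) (p := ∞) (μ := μ)] with x hx hT2x hT21x hγx hF2x h0x h0x'
    rw [h0x'] at hT2x
    have h2 : φ₂ (g₂ x) * (T₂ g₂) x - γ₂ x * g₂ x = 0 := by
      rw [← hF2x, h0x]; rfl
    have h3 : φ₂ (g₂ x) * (T₂ g₂) x ≤ φ₁ (g₂ x) * (T₁ g₂) x :=
      mul_le_mul (hφle _) hT21x hT2x (le_trans (hφ₂nn _ hx) (hφle _))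
    have h4 : γ₁ x * g₂ x ≤ γ₂ x * g₂ x := by nlinarith [hx.1]
    linarith
  have hbase : g₂ ≤ S g₂ := by
    rw [← Lp.coeFn_le]
    filter_upwards [hS g₂, hF₁g₂] with x hx hFx
    rw [hx]; nlinarith
  -- the iteration
  set seq : ℕ → Lp ℝ ∞ μ := fun n => S^[n] g₂ with hseqdef
  have hseq0 : seq 0 = g₂ := rfl
  have hseqsucc : ∀ n, seq (n + 1) = S (seq n) := fun n => Function.iterate_succ_apply' S n g₂
  have hseqP : ∀ n, (∀ᵐ x ∂μ, seq n x ∈ Set.Icc (0:ℝ) 1) ∧ seq n ≤ seq (n + 1) := by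
    intro n
    induction n with
    | zero => exact ⟨hg₂Δ, by rw [hseqsucc 0]; exact hbase⟩
    | succ k ih =>
      have hΔ : ∀ᵐ x ∂μ, seq (k+1) x ∈ Set.Icc (0:ℝ) 1 := by
        rw [hseqsucc k]; exact hinv _ ih.1
      refine ⟨hΔ, ?_⟩
      rw [hseqsucc (k+1)]
      conv_lhs => rw [hseqsucc k]
      exact hmono _ _ ih.1 hΔ ih.2
  have hseqmono : Monotone seq := monotone_nat_of_le_succ fun n => (hseqP n).2
  -- measurable representatives and the pointwise limit
  have hmeas : ∀ n, AEStronglyMeasurable (⇑(seq n)) μ := fun n =>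
    (Lp.memLp (seq n)).aestronglyMeasurable
  set w : ℕ → Ω → ℝ := fun n => (hmeas n).mk _ with hwdef
  have hw : ∀ n, StronglyMeasurable (w n) := fun n => (hmeas n).stronglyMeasurable_mk
  have hwe : ∀ n, ⇑(seq n) =ᵐ[μ] w n := fun n => (hmeas n).ae_eq_mk
  set v : Ω → ℝ≥0∞ := fun x => ⨆ n, ENNReal.ofReal (w n x) with hvdef
  have hv : Measurable v :=
    Measurable.iSup fun n => ENNReal.measurable_ofReal.comp (hw n).measurable
  set gf : Ω → ℝ := fun x => (v x).toReal with hgfdef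
  have hgfm : Measurable gf := hv.ennreal_toReal
  have E1 : ∀ᵐ x ∂μ, ∀ n, seq n x = w n x := ae_all_iff.2 hwe
  have E2 : ∀ᵐ x ∂μ, ∀ n, seq n x ∈ Set.Icc (0:ℝ) 1 := ae_all_iff.2 fun n => (hseqP n).1
  have E3 : ∀ᵐ x ∂μ, ∀ n, seq n x ≤ seq (n + 1) x :=
    ae_all_iff.2 fun n => (Lp.coeFn_le _ _).2 (hseqP n).2
  have hconv : ∀ᵐ x ∂μ, Tendsto (fun n => seq n x) atTop (nhds (gf x)) ∧
      gf x ∈ Set.Icc (0:ℝ) 1 ∧ g₂ x ≤ gf x := by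
    filter_upwards [E1, E2, E3] with x h1 h2 h3
    have hmono' : Monotone fun n => (seq n) x := monotone_nat_of_le_succ h3
    have hbdd : BddAbove (Set.range fun n => (seq n) x) :=
      ⟨1, by rintro r ⟨n, rfl⟩; exact (h2 n).2⟩
    set A := ⨆ n, (seq n) x with hAdef
    have hA_ub : ∀ n, (seq n) x ≤ A := fun n => le_ciSup hbdd n
    have hA_le1 : A ≤ 1 := ciSup_le fun n => (h2 n).2
    have hA_0 : (0:ℝ) ≤ A := le_trans (h2 0).1 (hA_ub 0)
    have htend : Tendsto (fun n => (seq n) x) atTop (nhds A) := tendsto_atTop_ciSup hmono' hbdd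
    have hofReal : Tendsto (fun n => ENNReal.ofReal ((seq n) x)) atTop
        (nhds (ENNReal.ofReal A)) := (ENNReal.continuous_ofReal.tendsto _).comp htend
    have hsup : v x = ENNReal.ofReal A := by
      have e1 : v x = ⨆ n, ENNReal.ofReal ((seq n) x) := by
        rw [hvdef]; exact iSup_congr fun n => by rw [h1 n]
      rw [e1]
      refine le_antisymm (iSup_le fun n => ENNReal.ofReal_le_ofReal (hA_ub n)) ?_
      exact le_of_tendsto hofReal (Filter.Eventually.of_forall fun n =>
        le_iSup (fun n => ENNReal.ofReal ((seq n) x)) n)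
    have hgfx : gf x = A := by rw [hgfdef]; simp only [hsup, ENNReal.toReal_ofReal hA_0]
    refine ⟨by rw [hgfx]; exact htend, by rw [hgfx]; exact ⟨hA_0, hA_le1⟩, ?_⟩
    have h0 : g₂ x = (seq 0) x := by rw [hseq0]
    rw [hgfx, h0]; exact hA_ub 0
  have hgfL : MemLp gf ∞ μ := by
    refine memLp_top_of_bound hgfm.aestronglyMeasurable 1 ?_
    filter_upwards [hconv] with x hx
    rw [Real.norm_eq_abs, abs_le]
    exact ⟨by linarith [hx.2.1.1], hx.2.1.2⟩
  set ginf : Lp ℝ ∞ μ := hgfL.toLp gf with hginfdef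
  have hginfc : ⇑ginf =ᵐ[μ] gf := hgfL.coeFn_toLp
  have hginfΔ : ∀ᵐ x ∂μ, ginf x ∈ Set.Icc (0:ℝ) 1 := by
    filter_upwards [hginfc, hconv] with x h1 h2; rw [h1]; exact h2.2.1
  -- convergence in Lᵖ norm
  have hp0 : p ≠ 0 := (zero_lt_one.trans hp1).ne'
  have hpt : 0 < p.toReal := ENNReal.toReal_pos hp0 hp2
  have hlint : Tendsto (fun n => ∫⁻ x, (‖(seq n) x - gf x‖₊ : ℝ≥0∞) ^ p.toReal ∂μ) atTop
      (nhds 0) := by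
    have h0 : (0:ℝ≥0∞) = ∫⁻ _, (0:ℝ≥0∞) ∂μ := by simp
    rw [h0]
    refine tendsto_lintegral_of_dominated_convergence' (fun _ => (2:ℝ≥0∞) ^ p.toReal)
      (fun n => ?_) (fun n => ?_) ?_ ?_
    · exact (((hmeas n).aemeasurable.sub hgfm.aemeasurable).enorm).pow aemeasurable_const
    · filter_upwards [hconv, (hseqP n).1] with x hx hn
      have hb : |(seq n) x - gf x| ≤ 2 := by
        rw [abs_le]
        constructor
        · nlinarith [hn.1, hx.2.1.2]
        · nlinarith [hn.2, hx.2.1.1]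
      have hb' : (‖(seq n) x - gf x‖₊ : ℝ≥0∞) ≤ 2 := by
        rw [← enorm_eq_nnnorm, ← ofReal_norm, Real.norm_eq_abs]
        calc ENNReal.ofReal |(seq n) x - gf x| ≤ ENNReal.ofReal 2 :=
              ENNReal.ofReal_le_ofReal hb
          _ = 2 := by norm_num
      exact ENNReal.rpow_le_rpow hb' hpt.le
    · rw [lintegral_const]
      exact ENNReal.mul_ne_top (ENNReal.rpow_ne_top_of_nonneg hpt.le (by norm_num))
        (measure_ne_top μ _)
    · filter_upwards [hconv] with x hx
      have hd : Tendsto (fun n => (seq n) x - gf x) atTop (nhds 0) := by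
        simpa using hx.1.sub (tendsto_const_nhds (x := gf x))
      have hn : Tendsto (fun n => (‖(seq n) x - gf x‖₊ : ℝ≥0∞)) atTop (nhds 0) := by
        rw [← ENNReal.coe_zero]
        refine ENNReal.tendsto_coe.2 ?_
        have := (continuous_nnnorm.tendsto (0:ℝ)).comp hd
        simpa [Function.comp_def] using this
      have := hn.ennrpow_const p.toReal
      rwa [ENNReal.zero_rpow_of_pos hpt] at this
  have hDn : Tendsto (fun n => eLpNorm (⇑(seq n) - ⇑ginf) p μ) atTop (nhds 0) := by
    have hcongr : ∀ n, eLpNorm (⇑(seq n) - ⇑ginf) p μ =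
        (∫⁻ x, (‖(seq n) x - gf x‖₊ : ℝ≥0∞) ^ p.toReal ∂μ) ^ (1 / p.toReal) := by
      intro n
      rw [eLpNorm_congr_ae (g := fun x => (seq n) x - gf x)
        (by filter_upwards [hginfc] with x h1; simp [h1])]
      exact eLpNorm_eq_lintegral_rpow_enorm_toReal hp0 hp2
    simp only [hcongr]
    have := hlint.ennrpow_const (1 / p.toReal)
    rwa [ENNReal.zero_rpow_of_pos (by positivity)] at this
  have hTn : Tendsto (fun n => eLpNorm (⇑(T₁ (seq n)) - ⇑(T₁ ginf)) p μ) atTop (nhds 0) := by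
    have hub : ∀ n, eLpNorm (⇑(T₁ (seq n)) - ⇑(T₁ ginf)) p μ ≤
        Cp * eLpNorm (⇑(seq n) - ⇑ginf) p μ := by
      intro n
      have e1 : eLpNorm (⇑(T₁ (seq n)) - ⇑(T₁ ginf)) p μ =
          eLpNorm (⇑(T₁ (seq n - ginf))) p μ := by
        refine eLpNorm_congr_ae ?_
        rw [map_sub]
        exact (Lp.coeFn_sub (T₁ (seq n)) (T₁ ginf)).symm
      have e2 : eLpNorm (⇑(seq n - ginf)) p μ = eLpNorm (⇑(seq n) - ⇑ginf) p μ :=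
        eLpNorm_congr_ae (Lp.coeFn_sub (seq n) ginf)
      rw [e1, ← e2]
      exact hT₁bound _
    have hCpD : Tendsto (fun n => Cp * eLpNorm (⇑(seq n) - ⇑ginf) p μ) atTop (nhds 0) := by
      have := ENNReal.Tendsto.const_mul (a := Cp) hDn (Or.inr hCp)
      rwa [mul_zero] at this
    exact tendsto_of_tendsto_of_tendsto_of_le_of_le tendsto_const_nhds hCpD
      (fun n => zero_le) hub
  have hTin : TendstoInMeasure μ (fun n => ⇑(T₁ (seq n))) atTop (⇑(T₁ ginf)) :=
    tendstoInMeasure_of_tendsto_eLpNorm hp0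
      (fun n => (Lp.memLp (T₁ (seq n))).aestronglyMeasurable)
      (Lp.memLp (T₁ ginf)).aestronglyMeasurable hTn
  obtain ⟨ns, hns, htends⟩ := hTin.exists_seq_tendsto_ae
  -- the iteration equation passes to the limit
  have heqn : ∀ n, ∀ᵐ x ∂μ, (seq (n+1)) x =
      (seq n) x + h * (φ₁ ((seq n) x) * (T₁ (seq n)) x - γ₁ x * (seq n) x) := by
    intro n
    have := hS (seq n)
    rw [← hseqsucc n] at this
    exact this
  have heq : ∀ᵐ x ∂μ, φ₁ (gf x) * (T₁ ginf) x - γ₁ x * gf x = 0 := by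
    filter_upwards [hconv, htends, ae_all_iff.2 heqn] with x hx hTx hEx
    have t1 : Tendsto (fun i => (seq (ns i)) x) atTop (nhds (gf x)) :=
      hx.1.comp hns.tendsto_atTop
    have t2 : Tendsto (fun i => (seq (ns i + 1)) x) atTop (nhds (gf x)) := by
      have ha : Tendsto (fun n => (seq (n + 1)) x) atTop (nhds (gf x)) :=
        hx.1.comp (tendsto_add_atTop_nat 1)
      exact ha.comp hns.tendsto_atTop
    have t3 : Tendsto (fun i => φ₁ ((seq (ns i)) x)) atTop (nhds (φ₁ (gf x))) :=
      (hφ₁lip.continuous.tendsto (gf x)).comp t1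
    have t5 : Tendsto (fun i => (seq (ns i)) x + h * (φ₁ ((seq (ns i)) x) *
        (T₁ (seq (ns i))) x - γ₁ x * (seq (ns i)) x)) atTop
        (nhds (gf x + h * (φ₁ (gf x) * (T₁ ginf) x - γ₁ x * gf x))) :=
      t1.add (((t3.mul hTx).sub (t1.const_mul (γ₁ x))).const_mul h)
    have t6 : Tendsto (fun i => (seq (ns i + 1)) x) atTop
        (nhds (gf x + h * (φ₁ (gf x) * (T₁ ginf) x - γ₁ x * gf x))) :=
      Tendsto.congr (fun i => (hEx (ns i)).symm) t5
    have hid := tendsto_nhds_unique t2 t6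
    have hE : h * (φ₁ (gf x) * (T₁ ginf) x - γ₁ x * gf x) = 0 := by linarith
    exact (mul_eq_zero.1 hE).resolve_left hpos.ne'
  have hzero : F₁ ginf = 0 := by
    refine Lp.ext ?_
    filter_upwards [hF₁ ginf, hginfc, heq, Lp.coeFn_zero ℝ ∞ μ] with x h1 h2 h3 h0
    rw [h1, h0]
    simp only [h2, h3, Pi.zero_apply]
  have hfin : ginf ≤ g₁ := hg₁max ginf hginfΔ hzero
  filter_upwards [(Lp.coeFn_le ginf g₁).2 hfin, hginfc, hconv] with x e1 e2 e3
  calc g₂ x ≤ gf x := e3.2.2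
    _ = ginf x := e2.symm
    _ ≤ g₁ x := e1
end
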